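/- arXiv:2010.04557 — 12 statements merged into one kernel-verified Lean document; each statement's English description precedes it below -/
import Mathlib

section
/- For every x ∈ ℝ, the series Σ_{k=0}^{∞} f_Y(x − (2k+1)a) converges and F_X(x) = 2a Σ_{k=0}^{∞} f_Y(x − (2k+1)a). -/
open MeasureTheory Real

/-- For every `x ∈ ℝ`, the series `Σ_{k=0}^{∞} f_Y(x − (2k+1)a)` converges and
`F_X(x) = 2a Σ_{k=0}^{∞} f_Y(x − (2k+1)a)`. -/
theorem stmt_1 (a : ℝ) (ha : 0 < a)
    (fX : ℝ → ℝ) (hfX_pos : ∀ x, 0 ≤ fX x) (hfX_int : Integrable fX)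
    (fε : ℝ → ℝ) (hfε : fε = Set.indicator (Set.Icc (-a) a) fun _ => 1 / (2 * a))
    (FX : ℝ → ℝ) (hFX : ∀ x, FX x = ∫ u in Set.Iic x, fX u)
    (fY : ℝ → ℝ) (hfY : ∀ x, fY x = ∫ u, fX (x - u) * fε u) :
    ∀ x : ℝ, Summable (fun k : ℕ => fY (x - (2 * (k : ℝ) + 1) * a)) ∧
      FX x = 2 * a * ∑' k : ℕ, fY (x - (2 * (k : ℝ) + 1) * a) := by
  intro x
  have ha2 : (2 : ℝ) * a ≠ 0 := by positivity
  -- key identity : 2 * a * fY y = FX (y + a) - FX (y - a)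
  have key : ∀ y : ℝ, 2 * a * fY y = FX (y + a) - FX (y - a) := by
    intro y
    have h1 : fY y = (∫ u in Set.Icc (-a) a, fX (y - u)) * (1 / (2 * a)) := by
      rw [hfY]
      have : (fun u => fX (y - u) * fε u)
          = Set.indicator (Set.Icc (-a) a) (fun u => fX (y - u) * (1 / (2 * a))) := by
        funext u
        by_cases hu : u ∈ Set.Icc (-a) a
        · simp [hfε, Set.indicator_of_mem hu]
        · simp [hfε, Set.indicator_of_notMem hu]
      rw [this, integral_indicator measurableSet_Icc, integral_mul_const]
    have h2 : (∫ u in Set.Icc (-a) a, fX (y - u)) = ∫ u in Set.Ioc (y - a) (y + a), fX u := by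
      rw [integral_Icc_eq_integral_Ioc, ← intervalIntegral.integral_of_le (by linarith),
        intervalIntegral.integral_comp_sub_left fX y,
        intervalIntegral.integral_of_le (by linarith)]
      ring_nf
    have h3 : FX (y + a) - FX (y - a) = ∫ u in Set.Ioc (y - a) (y + a), fX u := by
      rw [hFX, hFX, intervalIntegral.integral_Iic_sub_Iic hfX_int.integrableOn hfX_int.integrableOn,
        intervalIntegral.integral_of_le (by linarith)]
    rw [h1, h2, h3]
    field_simp
  -- partial sums telescope
  have tel : ∀ n : ℕ, (∑ k ∈ Finset.range n, 2 * a * fY (x - (2 * (k : ℝ) + 1) * a))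
      = FX x - FX (x - 2 * n * a) := by
    intro n
    have : ∀ k : ℕ, 2 * a * fY (x - (2 * (k : ℝ) + 1) * a)
        = FX (x - 2 * (k : ℝ) * a) - FX (x - 2 * ((k : ℝ) + 1) * a) := by
      intro k
      rw [key]
      ring_nf
    simp_rw [this]
    have := Finset.sum_range_sub' (fun k : ℕ => FX (x - 2 * (k : ℝ) * a)) n
    simpa using this
  -- FX tends to 0 at -∞ along our sequence
  have hFX_tendsto : Filter.Tendsto (fun n : ℕ => FX (x - 2 * n * a)) Filter.atTop (nhds 0) := by
    have hanti : Antitone (fun n : ℕ => Set.Iic (x - 2 * n * a)) := by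
      intro m n hmn
      apply Set.Iic_subset_Iic.2
      have : (m : ℝ) ≤ n := Nat.cast_le.2 hmn
      nlinarith
    have hint : (⋂ n : ℕ, Set.Iic (x - 2 * (n : ℝ) * a)) = ∅ := by
      ext y
      simp only [Set.mem_iInter, Set.mem_Iic, Set.mem_empty_iff_false, iff_false, not_forall,
        not_le]
      obtain ⟨n, hn⟩ := exists_nat_gt ((x - y) / (2 * a))
      exact ⟨n, by nlinarith [(div_lt_iff₀ (by positivity)).1 hn]⟩
    have := Antitone.tendsto_setIntegral (μ := volume) (f := fX)
      (fun n : ℕ => measurableSet_Iic) hanti hfX_int.integrableOn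
    rw [hint] at this
    simp only [Measure.restrict_empty, integral_zero_measure] at this
    simpa [hFX] using this
  -- partial sums of 2a * fY converge to FX x
  have hps : Filter.Tendsto
      (fun n : ℕ => ∑ k ∈ Finset.range n, 2 * a * fY (x - (2 * (k : ℝ) + 1) * a))
      Filter.atTop (nhds (FX x)) := by
    simp_rw [tel]
    simpa using Filter.Tendsto.const_sub (FX x) hFX_tendsto
  have hfY_nonneg : ∀ y : ℝ, 0 ≤ fY y := by
    intro y
    rw [hfY]
    apply integral_nonneg
    intro u
    apply mul_nonneg (hfX_pos _)
    rw [hfε]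
    apply Set.indicator_nonneg
    intro _ _
    positivity
  have hsum : HasSum (fun k : ℕ => 2 * a * fY (x - (2 * (k : ℝ) + 1) * a)) (FX x) := by
    rw [hasSum_iff_tendsto_nat_of_nonneg (fun k => mul_nonneg (by positivity) (hfY_nonneg _))]
    exact hps
  have hsum' : HasSum (fun k : ℕ => fY (x - (2 * (k : ℝ) + 1) * a)) (FX x / (2 * a)) := by
    have := hsum.div_const (2 * a)
    simpa [mul_div_assoc, mul_div_cancel_left₀ _ ha2] using this
  refine ⟨hsum'.summable, ?_⟩
  rw [hsum'.tsum_eq]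
  field_simp
end

section
/- For every x ∈ ℝ, the series Σ_{k=0}^{∞} f_Y(x + (2k+1)a) converges and 2a Σ_{k=0}^{∞} f_Y(x + (2k+1)a) = ‖f_X‖₁ − F_X(x). -/
/-!
Convolving with the uniform density turns `f_Y(t)` into `(2a)⁻¹` times the mass of `f_X` on the
window `(t - a, t + a]`. At the points `t = x + (2k+1)a` these windows are
`(x + 2ka, x + 2(k+1)a]`, which tile `(x, ∞)`, so by countable additivity of the integral the
series sums to `(2a)⁻¹ ∫_{(x,∞)} f_X = (2a)⁻¹ (‖f_X‖₁ - F_X(x))`.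
-/

open MeasureTheory Set Filter

theorem iUnion_Ioc_succ_eq_Ioi {α : Type*} [LinearOrder α] {s : ℕ → α} (hs : Monotone s)
    (h_top : Tendsto s atTop atTop) : ⋃ k, Ioc (s k) (s (k + 1)) = Ioi (s 0) := by
  refine subset_antisymm (iUnion_subset fun k y hy => (hs k.zero_le).trans_lt hy.1) fun y hy => ?_
  obtain ⟨N, hN⟩ := (h_top.eventually_ge_atTop y).exists
  obtain ⟨k, -, hk⟩ := mem_iUnion₂.1 (Ioc_subset_biUnion_Ioc N s ⟨hy, hN⟩)
  exact mem_iUnion.2 ⟨k, hk⟩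

theorem hasSum_setIntegral_Ioc_succ {E : Type*} [NormedAddCommGroup E] [NormedSpace ℝ E]
    {μ : Measure ℝ} {f : ℝ → E} {s : ℕ → ℝ} (hs : Monotone s) (h_top : Tendsto s atTop atTop)
    (hf : IntegrableOn f (Ioi (s 0)) μ) :
    HasSum (fun k => ∫ v in Ioc (s k) (s (k + 1)), f v ∂μ) (∫ v in Ioi (s 0), f v ∂μ) := by
  rw [← iUnion_Ioc_succ_eq_Ioi hs h_top] at hf ⊢
  exact hasSum_integral_iUnion (fun _ => measurableSet_Ioc)
    (by simpa only [Order.succ_eq_add_one] using hs.pairwise_disjoint_on_Ioc_succ) hf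

theorem integral_sub_mul_indicator_Icc (f : ℝ → ℝ) (a c t : ℝ) :
    ∫ u, f (t - u) * (Icc (-a) a).indicator (fun _ => c) u
      = c * ∫ v in Ioc (t - a) (t + a), f v := by
  have h : (fun u => f (t - u) * (Icc (-a) a).indicator (fun _ => c) u)
      = fun u => (Icc (t - a) (t + a)).indicator (fun v => f v * c) (t - u) := by
    ext u
    have hmem : t - u ∈ Icc (t - a) (t + a) ↔ u ∈ Icc (-a) a := by
      simp only [mem_Icc]
      constructor <;> rintro ⟨h₁, h₂⟩ <;> constructor <;> linarith
    simp only [indicator_apply, hmem]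
    split_ifs <;> simp only [mul_zero]
  rw [h, integral_sub_left_eq_self _ volume t, integral_indicator measurableSet_Icc,
    integral_Icc_eq_integral_Ioc, integral_mul_const, mul_comm]

theorem stmt_2_general (a : ℝ) (ha : 0 < a)
    (fX : ℝ → ℝ) (hfX_int : Integrable fX)
    (fε : ℝ → ℝ) (hfε : fε = Set.indicator (Set.Icc (-a) a) fun _ => 1 / (2 * a))
    (FX : ℝ → ℝ) (hFX : ∀ x, FX x = ∫ u in Set.Iic x, fX u)
    (fY : ℝ → ℝ) (hfY : ∀ x, fY x = ∫ u, fX (x - u) * fε u) :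
    ∀ x : ℝ, Summable (fun k : ℕ => fY (x + (2 * (k : ℝ) + 1) * a)) ∧
      2 * a * ∑' k : ℕ, fY (x + (2 * (k : ℝ) + 1) * a) = (∫ u, fX u) - FX x := by
  intro x
  set s : ℕ → ℝ := fun k => x + k * (2 * a)
  have hs : Monotone s := fun m n hmn => by simp only [s]; gcongr
  have h_top : Tendsto s atTop atTop :=
    tendsto_atTop_add_const_left _ x
      (tendsto_natCast_atTop_atTop.atTop_mul_const (by positivity))
  have h_term : ∀ k : ℕ, fY (x + (2 * (k : ℝ) + 1) * a)
      = 1 / (2 * a) * ∫ v in Ioc (s k) (s (k + 1)), fX v := fun k => by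
    rw [hfY, hfε, integral_sub_mul_indicator_Icc]
    congr 3
    simp only [s, Nat.cast_add, Nat.cast_one]
    congr 1 <;> ring
  have h_sum : HasSum (fun k : ℕ => fY (x + (2 * (k : ℝ) + 1) * a))
      (1 / (2 * a) * ∫ v in Ioi x, fX v) := by
    have hs0 : s 0 = x := by simp only [s, Nat.cast_zero, zero_mul, add_zero]
    simpa only [h_term, hs0] using
      (hasSum_setIntegral_Ioc_succ hs h_top hfX_int.integrableOn).mul_left (1 / (2 * a))
  refine ⟨h_sum.summable, ?_⟩
  rw [h_sum.tsum_eq, hFX, ← intervalIntegral.integral_Iic_add_Ioi hfX_int.integrableOn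
    hfX_int.integrableOn]
  field_simp
  exact (add_sub_cancel_left _ _).symm

/-- For every `x ∈ ℝ`, the series `Σ_{k=0}^{∞} f_Y(x + (2k+1)a)` converges and
`2a Σ_{k=0}^{∞} f_Y(x + (2k+1)a) = ‖f_X‖₁ − F_X(x)`. -/
theorem stmt_2 (a : ℝ) (ha : 0 < a)
    (fX : ℝ → ℝ) (hfX_pos : ∀ x, 0 ≤ fX x) (hfX_int : Integrable fX)
    (fε : ℝ → ℝ) (hfε : fε = Set.indicator (Set.Icc (-a) a) fun _ => 1 / (2 * a))
    (FX : ℝ → ℝ) (hFX : ∀ x, FX x = ∫ u in Set.Iic x, fX u)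
    (fY : ℝ → ℝ) (hfY : ∀ x, fY x = ∫ u, fX (x - u) * fε u) :
    ∀ x : ℝ, Summable (fun k : ℕ => fY (x + (2 * (k : ℝ) + 1) * a)) ∧
      2 * a * ∑' k : ℕ, fY (x + (2 * (k : ℝ) + 1) * a) = (∫ u, fX u) - FX x :=
  stmt_2_general a ha fX hfX_int fε hfε FX hFX fY hfY
end

section
/- (Inversion lemma.) Fix an integer N ≥ 0, points y_1, …, y_N ∈ ℝ, and a real n > 0. For t > 0 with At ≤ a define the kernel deconvolution estimate f̂_t(x) = (2a/(n t²)) Σ_{k=0}^{∞} Σ_{i=1}^{N} K'((x − (2k+1)a − y_i)/t) (for each x only finitely many terms are nonzero). Then for all h, t > 0 with Ah ≤ a and At ≤ a, and all x ∈ ℝ, (K_h ⋆ f̂_t)(x) = (K_t ⋆ f̂_h)(x), where ⋆ denotes convolution on ℝ. -/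
/-!
Write `K_t x = t⁻¹ K (x / t)`. Since `t⁻² K' (v / t)` is the derivative of `K_t` at `v`, the
estimate is `f̂_t = (2a/n) ∑ₖ ∑ᵢ K_t' (· - c_{k,i})` with `c_{k,i} = (2k+1)a + y_i`. Only finitely
many shifts `c_{k,i}` come within `Ah + At` of a fixed `x`, so both convolutions reduce to the same
finite sum, and termwise `K_h ⋆ K_t' = (K_h ⋆ K_t)' = (K_t ⋆ K_h)' = K_t ⋆ K_h'` because convolution
is commutative.
-/

open MeasureTheory Real
open Function Filter ContinuousLinearMap

noncomputable def scaledKernel (K : ℝ → ℝ) (h x : ℝ) : ℝ := h⁻¹ * K (x / h)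

namespace scaledKernel

variable {K : ℝ → ℝ} {A h : ℝ}

theorem contDiff (hK : ContDiff ℝ 1 K) : ContDiff ℝ 1 (scaledKernel K h) :=
  contDiff_const.mul (hK.comp (contDiff_id.div_const h))

theorem deriv_eq (x : ℝ) :
    deriv (scaledKernel K h) x = (h ^ 2)⁻¹ * deriv K (x / h) := by
  have : scaledKernel K h = fun x => h⁻¹ * K (h⁻¹ * x) := by
    ext x; simp only [scaledKernel, div_eq_inv_mul]
  rw [this, deriv_const_mul_field, deriv_comp_mul_left, smul_eq_mul, div_eq_inv_mul]
  ring

theorem support_subset (hKsupp : support K ⊆ Set.Icc (-A) A) (hh : 0 < h) :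
    support (scaledKernel K h) ⊆ Set.Icc (-(A * h)) (A * h) := by
  intro x hx
  have hx' := hKsupp (right_ne_zero_of_mul hx)
  rw [Set.mem_Icc, le_div_iff₀ hh, div_le_iff₀ hh] at hx'
  exact ⟨by linarith, hx'.2⟩

theorem support_deriv_subset (hKsupp : support K ⊆ Set.Icc (-A) A) (hh : 0 < h) :
    support (deriv (scaledKernel K h)) ⊆ Set.Icc (-(A * h)) (A * h) :=
  _root_.support_deriv_subset.trans (closure_minimal (support_subset hKsupp hh) isClosed_Icc)

theorem hasCompactSupport (hKsupp : support K ⊆ Set.Icc (-A) A) (hh : 0 < h) :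
    HasCompactSupport (scaledKernel K h) :=
  .of_support_subset_isCompact isCompact_Icc (support_subset hKsupp hh)

end scaledKernel

theorem integral_mul_deriv_sub_comm {f g : ℝ → ℝ} (hf : ContDiff ℝ 1 f) (hg : ContDiff ℝ 1 g)
    (hfc : HasCompactSupport f) (hgc : HasCompactSupport g) (x c : ℝ) :
    ∫ u, f (x - u) * deriv g (u - c) = ∫ u, g (x - u) * deriv f (u - c) := by
  -- both sides are `(f ⋆ g)' (x - c)`, differentiating the convolution in one factor or the other
  have hfg := hgc.hasDerivAt_convolution_right (mul ℝ ℝ) (μ := volume)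
    hf.continuous.locallyIntegrable hg (x - c)
  have hgf := hfc.hasDerivAt_convolution_right (mul ℝ ℝ) (μ := volume)
    hg.continuous.locallyIntegrable hf (x - c)
  rw [← convolution_flip, flip_mul] at hgf
  have key := hfg.unique hgf
  rw [convolution_mul_swap, convolution_mul_swap] at key
  rw [← integral_sub_right_eq_self _ c,
    ← integral_sub_right_eq_self (fun t => g (x - c - t) * deriv f t) c] at key
  simpa only [sub_sub_sub_cancel_right] using key

theorem integral_mul_tsum_sum_eq_sum_range {ι : Type*} [Fintype ι] {φ ψ : ℝ → ℝ} {R₁ R₂ : ℝ}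
    (hφ : Continuous φ) (hψ : Continuous ψ)
    (hφs : support φ ⊆ Set.Icc (-R₁) R₁) (hψs : support ψ ⊆ Set.Icc (-R₂) R₂)
    {c : ℕ → ι → ℝ} {x : ℝ} {M : ℕ} (hM : ∀ k ≥ M, ∀ i, R₁ + R₂ < |x - c k i|) :
    ∫ u, φ (x - u) * ∑' k, ∑ i, ψ (u - c k i) =
      ∑ k ∈ Finset.range M, ∑ i, ∫ u, φ (x - u) * ψ (u - c k i) := by
  have hvanish : ∀ u, ∀ k ≥ M, ∀ i, φ (x - u) * ψ (u - c k i) = 0 := by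
    intro u k hk i
    by_contra hne
    obtain ⟨hu, hcu⟩ := mul_ne_zero_iff.mp hne
    have := abs_le.2 (hφs hu)
    have := abs_le.2 (hψs hcu)
    linarith [hM k hk i, abs_sub_le x u (c k i)]
  have hfinite : ∀ u, φ (x - u) * ∑' k, ∑ i, ψ (u - c k i) =
      ∑ k ∈ Finset.range M, ∑ i, φ (x - u) * ψ (u - c k i) := by
    intro u
    simp_rw [← tsum_mul_left, Finset.mul_sum]
    refine tsum_eq_sum fun k hk => Finset.sum_eq_zero fun i _ => ?_
    exact hvanish u k (by simpa using hk) i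
  have hcompact : HasCompactSupport fun u => φ (x - u) :=
    (HasCompactSupport.of_support_subset_isCompact isCompact_Icc hφs).comp_isClosedEmbedding
      (Homeomorph.subLeft x).isClosedEmbedding
  have hint : ∀ k i, Integrable fun u => φ (x - u) * ψ (u - c k i) := fun k i =>
    ((hφ.comp (continuous_const.sub continuous_id)).mul
      (hψ.comp (continuous_id.sub continuous_const))).integrable_of_hasCompactSupport
      hcompact.mul_right
  simp_rw [hfinite]
  rw [integral_finsetSum _ fun k _ => integrable_finsetSum _ fun i _ => hint k i]
  exact Finset.sum_congr rfl fun k _ => integral_finsetSum _ fun i _ => hint k i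

theorem eventually_forall_lt_abs_sub_shift {ι : Type*} [Finite ι] {a : ℝ} (ha : 0 < a)
    (y : ι → ℝ) (x R : ℝ) :
    ∀ᶠ k : ℕ in atTop, ∀ i, R < |x - ((2 * k + 1) * a + y i)| := by
  have hodd : Tendsto (fun k : ℕ => (2 * (k : ℝ) + 1) * a) atTop atTop :=
    (tendsto_atTop_add_const_right _ 1
      (tendsto_natCast_atTop_atTop.const_mul_atTop two_pos)).atTop_mul_const ha
  refine eventually_all.2 fun i => ?_
  filter_upwards [(tendsto_abs_atTop_atTop.comp (tendsto_atTop_add_const_right _ (y i - x)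
    hodd)).eventually_gt_atTop R] with k hk
  rwa [abs_sub_comm, show (2 * k + 1) * a + y i - x = (2 * k + 1) * a + (y i - x) by ring]

theorem stmt_3_general (a A : ℝ) (ha : 0 < a)
    (K : ℝ → ℝ) (hK : ContDiff ℝ 1 K)
    (hKsupp : Function.support K ⊆ Set.Icc (-A) A)
    (N : ℕ) (y : Fin N → ℝ) (n : ℝ)
    (fhat : ℝ → ℝ → ℝ)
    (hfhat : ∀ t x, fhat t x =
      (2 * a / (n * t ^ 2)) *
        ∑' k : ℕ, ∑ i : Fin N, deriv K ((x - (2 * (k : ℝ) + 1) * a - y i) / t))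
    (Kb : ℝ → ℝ → ℝ) (hKb : ∀ h x, Kb h x = h⁻¹ * K (x / h)) :
    ∀ h t : ℝ, 0 < h → 0 < t → A * h ≤ a → A * t ≤ a →
      ∀ x : ℝ, (∫ u, Kb h (x - u) * fhat t u) = ∫ u, Kb t (x - u) * fhat h u := by
  intro h t hh ht _ _ x
  obtain rfl : Kb = scaledKernel K := funext₂ hKb
  set c : ℕ → Fin N → ℝ := fun k i => (2 * k + 1) * a + y i
  have hfhat_scaled : ∀ r u, fhat r u = 2 * a / n * ∑' k, ∑ i, deriv (scaledKernel K r) (u - c k i) := by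
    intro r u
    simp_rw [hfhat, scaledKernel.deriv_eq, ← Finset.mul_sum, tsum_mul_left, c, sub_add_eq_sub_sub]
    ring
  obtain ⟨M, hM⟩ := eventually_atTop.1 (eventually_forall_lt_abs_sub_shift ha y x (A * h + A * t))
  simp_rw [hfhat_scaled, mul_left_comm _ (2 * a / n), integral_const_mul]
  have hcont := fun r => (scaledKernel.contDiff (h := r) hK).continuous
  have hcont' := fun r => (scaledKernel.contDiff (h := r) hK).continuous_deriv le_rfl
  rw [integral_mul_tsum_sum_eq_sum_range (hcont h) (hcont' t)
      (scaledKernel.support_subset hKsupp hh) (scaledKernel.support_deriv_subset hKsupp ht) hM,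
    integral_mul_tsum_sum_eq_sum_range (hcont t) (hcont' h)
      (scaledKernel.support_subset hKsupp ht) (scaledKernel.support_deriv_subset hKsupp hh)
      fun k hk i => add_comm (A * h) (A * t) ▸ hM k hk i]
  congr 1
  refine Finset.sum_congr rfl fun k _ => Finset.sum_congr rfl fun i _ => ?_
  exact integral_mul_deriv_sub_comm (scaledKernel.contDiff hK) (scaledKernel.contDiff hK)
    (scaledKernel.hasCompactSupport hKsupp hh) (scaledKernel.hasCompactSupport hKsupp ht) x (c k i)

/-- Inversion lemma: for the kernel deconvolution estimates `f̂_t`, one has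
`K_h ⋆ f̂_t = K_t ⋆ f̂_h` whenever `Ah ≤ a` and `At ≤ a`. -/
theorem stmt_3 (a A : ℝ) (ha : 0 < a) (hA : 0 < A)
    (K : ℝ → ℝ) (hK : ContDiff ℝ 1 K)
    (hKsupp : Function.support K ⊆ Set.Icc (-A) A)
    (N : ℕ) (y : Fin N → ℝ) (n : ℝ) (hn : 0 < n)
    (fhat : ℝ → ℝ → ℝ)
    (hfhat : ∀ t x, fhat t x =
      (2 * a / (n * t ^ 2)) *
        ∑' k : ℕ, ∑ i : Fin N, deriv K ((x - (2 * (k : ℝ) + 1) * a - y i) / t))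
    (Kb : ℝ → ℝ → ℝ) (hKb : ∀ h x, Kb h x = h⁻¹ * K (x / h)) :
    ∀ h t : ℝ, 0 < h → 0 < t → A * h ≤ a → A * t ≤ a →
      ∀ x : ℝ, (∫ u, Kb h (x - u) * fhat t u) = ∫ u, Kb t (x - u) * fhat h u :=
  stmt_3_general a A ha K hK hKsupp N y n fhat hfhat Kb hKb
end

section
/- (Expectation identity, deterministic form of Lemma 1, first part.) Let h > 0 satisfy Ah ≤ a. Then for every x ∈ ℝ, (2a/h²) ∫_ℝ [ Σ_{k=0}^{∞} K'((x − (2k+1)a − u)/h) ] f_Y(u) du = (K_h ⋆ f_X)(x) = ∫_ℝ K_h(x−v) f_X(v) dv. -/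
open MeasureTheory Real

open Set Function

/-!
Put `Φ(u) = ∑ₖ K'((x - (2k+1)a - u)/h)`. Since `Ah ≤ a`, the `k`-th term vanishes unless
`|x - (2k+1)a - u| < a`, so at each `u` at most one term is nonzero and `Φ` is bounded by
`sup |K'|`. Fubini turns the left side into `∫ f_X(w) (2a)⁻¹ ∫_{w-a}^{w+a} Φ`, and on
`[w - a, w + a]` the series is a finite sum whose integral telescopes to `h K((x - w)/h)`.
-/

theorem integral_mul_convolution_eq {G : Type*} [MeasurableSpace G] [AddCommGroup G]
    [MeasurableAdd₂ G] [MeasurableNeg G] {μ : Measure G} [SFinite μ] [μ.IsAddLeftInvariant]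
    [μ.IsNegInvariant] {φ f g : G → ℝ} {C : ℝ} (hφ : AEStronglyMeasurable φ μ)
    (hφC : ∀ u, ‖φ u‖ ≤ C) (hf : Integrable f μ) (hg : Integrable g μ) :
    ∫ u, φ u * ∫ t, f (u - t) * g t ∂μ ∂μ = ∫ w, f w * ∫ u, φ u * g (u - w) ∂μ ∂μ := by
  have hprod : Integrable (fun p : G × G => φ p.1 * (f p.2 * g (p.1 - p.2))) (μ.prod μ) :=
    (hf.convolution_integrand (ContinuousLinearMap.mul ℝ ℝ) hg).bdd_mul hφ.comp_fst
      (Filter.Eventually.of_forall fun p => hφC p.1)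
  calc ∫ u, φ u * ∫ t, f (u - t) * g t ∂μ ∂μ
      = ∫ u, ∫ w, φ u * (f w * g (u - w)) ∂μ ∂μ := by
        congr 1 with u
        rw [integral_const_mul, ← integral_sub_left_eq_self _ μ u]
        simp only [sub_sub_cancel]
    _ = ∫ w, ∫ u, φ u * (f w * g (u - w)) ∂μ ∂μ := integral_integral_swap hprod
    _ = ∫ w, f w * ∫ u, φ u * g (u - w) ∂μ ∂μ := by
        congr 1 with w
        rw [← integral_const_mul]
        congr 1 with u
        ring

theorem integral_mul_indicator_Icc_sub {φ : ℝ → ℝ} {a : ℝ} (ha : 0 ≤ a) (c w : ℝ) :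
    ∫ u, φ u * (Icc (-a) a).indicator (fun _ => c) (u - w) = c * ∫ u in w - a..w + a, φ u := by
  have hind : (fun u => φ u * (Icc (-a) a).indicator (fun _ => c) (u - w))
      = (Icc (w - a) (w + a)).indicator fun u => c * φ u := by
    ext u
    simp only [indicator_apply, sub_mem_Icc_iff_left, neg_add_eq_sub, add_comm a w]
    split_ifs <;> ring
  rw [hind, integral_indicator measurableSet_Icc, integral_Icc_eq_integral_Ioc,
    ← intervalIntegral.integral_of_le (by linarith), intervalIntegral.integral_const_mul]

theorem support_subset_Ioo_of_continuous {E : Type*} [TopologicalSpace E] [Zero E] [T1Space E]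
    {f : ℝ → E} {b c : ℝ} (hf : Continuous f) (hsupp : support f ⊆ Icc b c) :
    support f ⊆ Ioo b c := by
  rw [← interior_Icc]
  exact hf.isOpen_support.subset_interior_iff.mpr hsupp

theorem intervalIntegral_deriv_comp_sub_div {K : ℝ → ℝ} (hK : ContDiff ℝ 1 K) {h : ℝ}
    (hh : h ≠ 0) (c s t : ℝ) :
    ∫ u in s..t, deriv K ((c - u) / h) = h * (K ((c - s) / h) - K ((c - t) / h)) := by
  simp only [sub_div]
  rw [intervalIntegral.integral_comp_sub_div (fun y => deriv K y) hh,
    intervalIntegral.integral_deriv_eq_sub (fun y _ => (hK.differentiable one_ne_zero) y)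
      ((hK.continuous_deriv le_rfl).intervalIntegrable _ _), smul_eq_mul]

noncomputable def derivKernelSeries (K : ℝ → ℝ) (a h x u : ℝ) : ℝ :=
  ∑' k : ℕ, deriv K ((x - (2 * (k : ℝ) + 1) * a - u) / h)

section derivKernelSeries

variable {K : ℝ → ℝ} {a A h x : ℝ}

theorem abs_lt_of_deriv_div_ne_zero (hK : ContDiff ℝ 1 K) (hKsupp : support K ⊆ Icc (-A) A)
    (hh : 0 < h) (hha : A * h ≤ a) {c : ℝ} (hc : deriv K (c / h) ≠ 0) : |c| < a := by
  have hsupp : support (deriv K) ⊆ Ioo (-A) A :=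
    support_subset_Ioo_of_continuous (hK.continuous_deriv le_rfl)
      (support_deriv_subset.trans (closure_minimal hKsupp isClosed_Icc))
  obtain ⟨hlo, hhi⟩ := hsupp hc
  rw [lt_div_iff₀ hh] at hlo
  rw [div_lt_iff₀ hh] at hhi
  exact abs_lt.mpr ⟨by linarith, by linarith⟩

theorem exists_forall_ne_deriv_eq_zero (hK : ContDiff ℝ 1 K) (hKsupp : support K ⊆ Icc (-A) A)
    (hh : 0 < h) (hha : A * h ≤ a) (u : ℝ) :
    ∃ k : ℕ, ∀ j ≠ k, deriv K ((x - (2 * (j : ℝ) + 1) * a - u) / h) = 0 := by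
  by_cases hex : ∃ k : ℕ, deriv K ((x - (2 * (k : ℝ) + 1) * a - u) / h) ≠ 0
  · obtain ⟨k, hk⟩ := hex
    refine ⟨k, fun j hjk => by_contra fun hj => hjk ?_⟩
    have hj' := abs_lt.mp (abs_lt_of_deriv_div_ne_zero hK hKsupp hh hha hj)
    have hk' := abs_lt.mp (abs_lt_of_deriv_div_ne_zero hK hKsupp hh hha hk)
    have ha : 0 < a := by linarith
    have hjk₁ : j < k + 1 := by exact_mod_cast (by nlinarith : (j : ℝ) < k + 1)
    have hkj₁ : k < j + 1 := by exact_mod_cast (by nlinarith : (k : ℝ) < j + 1)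
    omega
  · push Not at hex
    exact ⟨0, fun j _ => hex j⟩

theorem norm_derivKernelSeries_le (hK : ContDiff ℝ 1 K) (hKsupp : support K ⊆ Icc (-A) A)
    (hh : 0 < h) (hha : A * h ≤ a) {M : ℝ} (hM : ∀ y, ‖deriv K y‖ ≤ M) (u : ℝ) :
    ‖derivKernelSeries K a h x u‖ ≤ M := by
  obtain ⟨k, hk⟩ := exists_forall_ne_deriv_eq_zero (x := x) hK hKsupp hh hha u
  rw [derivKernelSeries, tsum_eq_single k hk]
  exact hM _

theorem measurable_derivKernelSeries (hK : ContDiff ℝ 1 K) :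
    Measurable (derivKernelSeries K a h x) :=
  Measurable.tsum fun _ => ((hK.continuous_deriv le_rfl).comp (by fun_prop)).measurable

theorem derivKernelSeries_eq_sum_range (hK : ContDiff ℝ 1 K) (hKsupp : support K ⊆ Icc (-A) A)
    (hh : 0 < h) (hha : A * h ≤ a) {N : ℕ} {u : ℝ} (hu : x - 2 * N * a ≤ u) :
    derivKernelSeries K a h x u
      = ∑ k ∈ Finset.range N, deriv K ((x - (2 * (k : ℝ) + 1) * a - u) / h) := by
  refine tsum_eq_sum fun k hk => by_contra fun hne => ?_
  have hk' := abs_lt.mp (abs_lt_of_deriv_div_ne_zero hK hKsupp hh hha hne)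
  have hNk : (N : ℝ) ≤ k := by exact_mod_cast not_lt.mp (Finset.mem_range.not.mp hk)
  nlinarith

theorem intervalIntegral_derivKernelSeries (hK : ContDiff ℝ 1 K)
    (hKsupp : support K ⊆ Icc (-A) A) (ha : 0 < a) (hh : 0 < h) (hha : A * h ≤ a) (w : ℝ) :
    ∫ u in w - a..w + a, derivKernelSeries K a h x u = h * K ((x - w) / h) := by
  set B : ℕ → ℝ := fun k => K ((x - 2 * k * a - w) / h)
  obtain ⟨N, hN⟩ := exists_nat_gt ((x - w + a) / (2 * a))
  rw [div_lt_iff₀ (by positivity)] at hN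
  have hBN : B N = 0 := by
    refine notMem_support.mp fun hmem => ?_
    have := (hKsupp hmem).1
    rw [le_div_iff₀ hh] at this
    nlinarith
  have hterm : ∀ k : ℕ, ∫ u in w - a..w + a, deriv K ((x - (2 * (k : ℝ) + 1) * a - u) / h)
      = h * (B k - B (k + 1)) := by
    intro k
    have e₀ : x - (2 * (k : ℝ) + 1) * a - (w - a) = x - 2 * k * a - w := by ring
    have e₁ : x - (2 * (k : ℝ) + 1) * a - (w + a) = x - 2 * ((k + 1 : ℕ) : ℝ) * a - w := by
      push_cast
      ring
    rw [intervalIntegral_deriv_comp_sub_div hK hh.ne', e₀, e₁]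
  calc ∫ u in w - a..w + a, derivKernelSeries K a h x u
      = ∫ u in w - a..w + a, ∑ k ∈ Finset.range N,
          deriv K ((x - (2 * (k : ℝ) + 1) * a - u) / h) := by
        refine intervalIntegral.integral_congr fun u hu => ?_
        rw [uIcc_of_le (by linarith)] at hu
        exact derivKernelSeries_eq_sum_range hK hKsupp hh hha (by linarith [hu.1])
    _ = h * (B 0 - B N) := by
        rw [intervalIntegral.integral_finsetSum
          (f := fun (k : ℕ) u => deriv K ((x - (2 * (k : ℝ) + 1) * a - u) / h)) fun k _ =>
            ((hK.continuous_deriv le_rfl).comp (by fun_prop)).intervalIntegrable _ _]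
        simp only [hterm, ← Finset.mul_sum, Finset.sum_range_sub']
    _ = h * K ((x - w) / h) := by simp [B, hBN]

end derivKernelSeries

theorem stmt_4_general (a A : ℝ) (ha : 0 < a)
    (fX : ℝ → ℝ) (hfX_int : Integrable fX)
    (fε : ℝ → ℝ) (hfε : fε = Set.indicator (Set.Icc (-a) a) fun _ => 1 / (2 * a))
    (fY : ℝ → ℝ) (hfY : ∀ x, fY x = ∫ u, fX (x - u) * fε u)
    (K : ℝ → ℝ) (hK : ContDiff ℝ 1 K)
    (hKsupp : Function.support K ⊆ Set.Icc (-A) A)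
    (h : ℝ) (hh : 0 < h) (hha : A * h ≤ a) :
    ∀ x : ℝ,
      (2 * a / h ^ 2) *
          ∫ u, (∑' k : ℕ, deriv K ((x - (2 * (k : ℝ) + 1) * a - u) / h)) * fY u
        = ∫ v, (h⁻¹ * K ((x - v) / h)) * fX v := by
  intro x
  subst hfε
  have hKcs : HasCompactSupport K :=
    isCompact_Icc.of_isClosed_subset (isClosed_tsupport K) (closure_minimal hKsupp isClosed_Icc)
  obtain ⟨M, hM⟩ := hKcs.deriv.exists_bound_of_continuous (hK.continuous_deriv le_rfl)
  have hfε_int : Integrable ((Icc (-a) a).indicator fun _ => 1 / (2 * a)) :=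
    (integrable_indicator_iff measurableSet_Icc).mpr (integrableOn_const measure_Icc_lt_top.ne)
  simp only [hfY]
  calc (2 * a / h ^ 2) * ∫ u, derivKernelSeries K a h x u * ∫ t, fX (u - t) *
        (Icc (-a) a).indicator (fun _ => 1 / (2 * a)) t
      = (2 * a / h ^ 2) * ∫ w, fX w * ((1 / (2 * a)) * (h * K ((x - w) / h))) := by
        rw [integral_mul_convolution_eq (measurable_derivKernelSeries hK).aestronglyMeasurable
          (norm_derivKernelSeries_le hK hKsupp hh hha hM) hfX_int hfε_int]
        simp only [integral_mul_indicator_Icc_sub ha.le,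
          intervalIntegral_derivKernelSeries hK hKsupp ha hh hha]
    _ = ∫ v, (h⁻¹ * K ((x - v) / h)) * fX v := by
        rw [← integral_const_mul]
        congr 1 with w
        field_simp

/-- Expectation identity (deterministic form of Lemma 1, first part):
for `h > 0` with `Ah ≤ a`,
`(2a/h²) ∫ [Σ_{k≥0} K'((x − (2k+1)a − u)/h)] f_Y(u) du = (K_h ⋆ f_X)(x)`. -/
theorem stmt_4 (a A : ℝ) (ha : 0 < a) (hA : 0 < A)
    (fX : ℝ → ℝ) (hfX_pos : ∀ x, 0 ≤ fX x) (hfX_int : Integrable fX)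
    (fε : ℝ → ℝ) (hfε : fε = Set.indicator (Set.Icc (-a) a) fun _ => 1 / (2 * a))
    (fY : ℝ → ℝ) (hfY : ∀ x, fY x = ∫ u, fX (x - u) * fε u)
    (K : ℝ → ℝ) (hK : ContDiff ℝ 1 K)
    (hKsupp : Function.support K ⊆ Set.Icc (-A) A)
    (h : ℝ) (hh : 0 < h) (hha : A * h ≤ a) :
    ∀ x : ℝ,
      (2 * a / h ^ 2) *
          ∫ u, (∑' k : ℕ, deriv K ((x - (2 * (k : ℝ) + 1) * a - u) / h)) * fY u
        = ∫ v, (h⁻¹ * K ((x - v) / h)) * fX v :=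
  stmt_4_general a A ha fX hfX_int fε hfε fY hfY K hK hKsupp h hh hha
end

section
/- For every v ∈ ℝ, the two-sided series Σ_{k∈ℤ} f_Y(v − (2k+1)a) converges and Σ_{k∈ℤ} f_Y(v − (2k+1)a) = ‖f_X‖₁ / (2a). -/
/-!
Convolving with the uniform density on `[-a, a]` averages `f_X` over a window of length `2a`:
`f_Y x = (2a)⁻¹ ∫_{(x-a, x+a]} f_X`. The windows centred at the points `v - (2k+1)a`, `k ∈ ℤ`,
tile the real line, so the series of window integrals sums to `∫ f_X` by countable additivity.
-/

open MeasureTheory Set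

theorem hasSum_setIntegral_Ioc_add_zsmul {E : Type*} [NormedAddCommGroup E] [NormedSpace ℝ E]
    {f : ℝ → E} (hf : Integrable f) {p : ℝ} (hp : 0 < p) (c : ℝ) :
    HasSum (fun n : ℤ => ∫ t in Ioc (c + n • p) (c + (n + 1) • p), f t) (∫ t, f t) := by
  have hcover := iUnion_Ioc_add_zsmul hp c
  simpa only [hcover, setIntegral_univ] using
    hasSum_integral_iUnion (fun _ => measurableSet_Ioc) (pairwise_disjoint_Ioc_add_zsmul c p)
      (hcover ▸ hf.integrableOn)

theorem integral_mul_indicator_Icc_const (f : ℝ → ℝ) {a : ℝ} (ha : 0 ≤ a) (c x : ℝ) :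
    ∫ u, f (x - u) * (Icc (-a) a).indicator (fun _ => c) u
      = (∫ t in Ioc (x - a) (x + a), f t) * c := by
  have hmul : (fun u => f (x - u) * (Icc (-a) a).indicator (fun _ => c) u)
      = (Icc (-a) a).indicator (fun u => f (x - u) * c) :=
    funext fun _ => (indicator_mul_right _ (fun u => f (x - u)) _).symm
  rw [hmul, integral_indicator measurableSet_Icc, integral_mul_const, integral_Icc_eq_integral_Ioc,
    ← intervalIntegral.integral_of_le (by linarith), intervalIntegral.integral_comp_sub_left f x,
    sub_neg_eq_add, intervalIntegral.integral_of_le (by linarith)]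

theorem stmt_5_general (a : ℝ) (ha : 0 < a)
    (fX : ℝ → ℝ) (hfX_int : Integrable fX)
    (fε : ℝ → ℝ) (hfε : fε = Set.indicator (Set.Icc (-a) a) fun _ => 1 / (2 * a))
    (fY : ℝ → ℝ) (hfY : ∀ x, fY x = ∫ u, fX (x - u) * fε u) :
    ∀ v : ℝ, Summable (fun k : ℤ => fY (v - (2 * (k : ℝ) + 1) * a)) ∧
      ∑' k : ℤ, fY (v - (2 * (k : ℝ) + 1) * a) = (∫ u, fX u) / (2 * a) := by
  intro v
  have hwindow (k : ℤ) : fY (v - (2 * (k : ℝ) + 1) * a)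
      = (∫ t in Ioc (v - 2 * a + (-k) • (2 * a)) (v - 2 * a + (-k + 1) • (2 * a)), fX t)
        * (1 / (2 * a)) := by
    rw [hfY, hfε, integral_mul_indicator_Icc_const fX ha.le]
    congr 4 <;> push_cast [zsmul_eq_mul] <;> ring
  have hsum : HasSum (fun k : ℤ => fY (v - (2 * (k : ℝ) + 1) * a))
      ((∫ u, fX u) * (1 / (2 * a))) := by
    simpa only [hwindow, Function.comp_def, Equiv.neg_apply] using
      ((Equiv.neg ℤ).hasSum_iff.mpr
        (hasSum_setIntegral_Ioc_add_zsmul hfX_int (by positivity) (v - 2 * a))).mul_right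
        (1 / (2 * a))
  exact ⟨hsum.summable, hsum.tsum_eq.trans (mul_one_div _ _)⟩

/-- For every `v ∈ ℝ`, the two-sided series `Σ_{k∈ℤ} f_Y(v − (2k+1)a)` converges and
equals `‖f_X‖₁ / (2a)`. -/
theorem stmt_5 (a : ℝ) (ha : 0 < a)
    (fX : ℝ → ℝ) (hfX_pos : ∀ x, 0 ≤ fX x) (hfX_int : Integrable fX)
    (fε : ℝ → ℝ) (hfε : fε = Set.indicator (Set.Icc (-a) a) fun _ => 1 / (2 * a))
    (fY : ℝ → ℝ) (hfY : ∀ x, fY x = ∫ u, fX (x - u) * fε u) :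
    ∀ v : ℝ, Summable (fun k : ℤ => fY (v - (2 * (k : ℝ) + 1) * a)) ∧
      ∑' k : ℤ, fY (v - (2 * (k : ℝ) + 1) * a) = (∫ u, fX u) / (2 * a) :=
  stmt_5_general a ha fX hfX_int fε hfε fY hfY
end

section
/- (Variance identity, deterministic form of Lemma 1, second part.) Let h > 0 satisfy Ah ≤ a. Then ∫_0^T ∫_ℝ L_h(t−u)² f_Y(u) du dt = T ‖f_X‖₁ ‖K'‖₂² / (2 a h). -/
open MeasureTheory Real

/-!
Because `A h ≤ a`, the translates `K'((x - (2k+1)a)/h)` have disjoint supports, one in each cell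
`[2ka, 2(k+1)a]`; hence the signs drop out of `L_h²`, which is the `2a`-periodic function
`h⁻² K'((x mod 2a - a)/h)²`. Averaging a `2a`-periodic function against the uniform density on
`[-a, a]` returns its mean over a period, `‖K'‖₂² / (2ah)`, whatever the point. By Fubini,
`∫ L_h(t - u)² f_Y(u) du = ‖f_X‖₁ ‖K'‖₂² / (2ah)` for every `t`, and integrating over `[0, T]`
gives the claim.
-/

theorem deriv_eq_zero_of_le_abs {f : ℝ → ℝ} {A : ℝ} (hf : ContDiff ℝ 1 f)
    (hsupp : Function.support f ⊆ Set.Icc (-A) A) {x : ℝ} (hx : A ≤ |x|) : deriv f x = 0 := by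
  have htsupp : tsupport f ⊆ Set.Icc (-A) A := closure_minimal hsupp isClosed_Icc
  have hzero : Set.EqOn (deriv f) 0 (Set.Iio (-A) ∪ Set.Ioi A) := by
    intro y hy
    by_contra hne
    have hy' := htsupp (support_deriv_subset hne)
    rcases hy with hy | hy
    · exact absurd hy'.1 (not_le.2 hy)
    · exact absurd hy'.2 (not_le.2 hy)
  have hclosure := hzero.closure (hf.continuous_deriv le_rfl) continuous_const
  rw [closure_union, closure_Iio, closure_Ioi] at hclosure
  exact hclosure (le_abs'.1 hx)

theorem tsum_mul_translate_eq {a : ℝ} (hp : 0 < 2 * a) {g : ℝ → ℝ}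
    (hg : ∀ y, a ≤ |y| → g y = 0) (c : ℤ → ℝ) (x : ℝ) :
    ∑' k : ℤ, c k * g (x - (2 * k + 1) * a) = c (toIcoDiv hp 0 x) * g (toIcoMod hp 0 x - a) := by
  have hk₀ : x - (2 * (toIcoDiv hp 0 x : ℝ) + 1) * a = toIcoMod hp 0 x - a := by
    rw [← self_sub_toIcoDiv_zsmul, zsmul_eq_mul]; ring
  rw [← hk₀]
  refine tsum_eq_single _ fun k hk => ?_
  rw [hg _ ?_, mul_zero]
  -- `|x - (2k+1)a| < a` would put `x - k • 2a` in `[0, 2a)`, forcing `k = toIcoDiv hp 0 x`.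
  by_contra! hlt
  rw [abs_lt] at hlt
  refine hk (toIcoDiv_eq_of_sub_zsmul_mem_Ico hp ⟨?_, ?_⟩).symm <;>
    simp only [zsmul_eq_mul] <;> linarith

theorem measurable_toIcoMod_zero {p : ℝ} (hp : 0 < p) : Measurable (toIcoMod hp 0) := by
  simp_rw [funext (toIcoMod_eq_fract_mul hp)]
  exact (measurable_fract.comp (measurable_id.div_const p)).mul_const p

theorem intervalIntegral_comp_toIcoMod {p : ℝ} (hp : 0 < p) (φ : ℝ → ℝ) (t : ℝ) :
    ∫ x in t..t + p, φ (toIcoMod hp 0 x) = ∫ x in 0..p, φ x := by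
  have hper : Function.Periodic (fun x => φ (toIcoMod hp 0 x)) p := fun x => by
    simp only [toIcoMod_add_right]
  rw [hper.intervalIntegral_add_eq t 0, zero_add, intervalIntegral.integral_of_le hp.le,
    intervalIntegral.integral_of_le hp.le, integral_Ioc_eq_integral_Ioo,
    integral_Ioc_eq_integral_Ioo]
  refine setIntegral_congr_fun measurableSet_Ioo fun x hx => ?_
  rw [(toIcoMod_eq_self hp).2 ⟨hx.1.le, by linarith [hx.2]⟩]

theorem integral_comp_toIcoMod_mul_uniform {a : ℝ} (hp : 0 < 2 * a) (φ : ℝ → ℝ) (x : ℝ) :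
    ∫ v, φ (toIcoMod hp 0 (x - v)) * (Set.Icc (-a) a).indicator (fun _ => 1 / (2 * a)) v
      = (∫ y in 0..2 * a, φ y) / (2 * a) := by
  have hind : (fun v => φ (toIcoMod hp 0 (x - v)) *
        (Set.Icc (-a) a).indicator (fun _ => 1 / (2 * a)) v)
      = (Set.Icc (-a) a).indicator fun v => φ (toIcoMod hp 0 (x - v)) * (1 / (2 * a)) := by
    ext v
    by_cases hv : v ∈ Set.Icc (-a) a <;> simp [hv]
  rw [hind, integral_indicator measurableSet_Icc, integral_mul_const, integral_Icc_eq_integral_Ioc,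
    ← intervalIntegral.integral_of_le (by linarith), intervalIntegral.integral_comp_sub_left
      (fun y => φ (toIcoMod hp 0 y)), show x - -a = x - a + 2 * a by ring,
    intervalIntegral_comp_toIcoMod]
  ring

theorem intervalIntegral_eq_integral_of_vanish {G : ℝ → ℝ} {a : ℝ} (ha : 0 ≤ a)
    (hG : ∀ y, a ≤ |y| → G y = 0) : ∫ y in -a..a, G y = ∫ y, G y := by
  rw [intervalIntegral.integral_of_le (by linarith)]
  refine setIntegral_eq_integral_of_forall_compl_eq_zero fun y hy => hG y ?_
  rw [Set.mem_Ioc, not_and_or, not_lt, not_le] at hy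
  rcases hy with hy | hy
  · rw [abs_of_nonpos (by linarith)]; linarith
  · rw [abs_of_pos (by linarith)]; exact hy.le

theorem integral_periodized_sq_mul_uniform {a h : ℝ} (hp : 0 < 2 * a) (hh : 0 < h) {g : ℝ → ℝ}
    (hg : ∀ y, a ≤ |y| → g (y / h) = 0) (x : ℝ) :
    ∫ v, h⁻¹ ^ 2 * g ((toIcoMod hp 0 (x - v) - a) / h) ^ 2 *
        (Set.Icc (-a) a).indicator (fun _ => 1 / (2 * a)) v
      = (∫ y, g y ^ 2) / (2 * a * h) := by
  rw [integral_comp_toIcoMod_mul_uniform hp (fun m => h⁻¹ ^ 2 * g ((m - a) / h) ^ 2),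
    intervalIntegral.integral_const_mul,
    intervalIntegral.integral_comp_sub_right (fun y => g (y / h) ^ 2),
    show 0 - a = -a by ring, show 2 * a - a = a by ring,
    intervalIntegral_eq_integral_of_vanish (by linarith) fun y hy => by simp [hg y hy],
    Measure.integral_comp_div (fun y => g y ^ 2), abs_of_pos hh, smul_eq_mul]
  field_simp

theorem integral_mul_convolution_eq_of_forall {F f g : ℝ → ℝ} {M c : ℝ} (hF : Measurable F)
    (hFM : ∀ x, ‖F x‖ ≤ M) (hf : Integrable f) (hg : Integrable g)
    (hc : ∀ x, ∫ v, F (x - v) * g v = c) (t : ℝ) :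
    ∫ u, F (t - u) * ∫ w, f (u - w) * g w = c * ∫ u, f u := by
  have hint : Integrable (fun p : ℝ × ℝ => F (t - p.1) * (f p.2 * g (p.1 - p.2)))
      (volume.prod volume) :=
    (hf.convolution_integrand (ContinuousLinearMap.mul ℝ ℝ) hg).bdd_mul
      (hF.comp (measurable_const.sub measurable_fst)).aestronglyMeasurable
      (Filter.Eventually.of_forall fun p => hFM _)
  calc ∫ u, F (t - u) * ∫ w, f (u - w) * g w
      = ∫ u, ∫ w, F (t - u) * (f w * g (u - w)) := by
        congr 1; ext u
        rw [← integral_const_mul, ← integral_sub_left_eq_self _ volume u]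
        simp only [sub_sub_cancel]
    _ = ∫ w, ∫ u, F (t - u) * (f w * g (u - w)) := integral_integral_swap hint
    _ = ∫ w, f w * c := by
        congr 1; ext w
        rw [← hc (t - w), ← integral_const_mul, ← integral_add_right_eq_self _ w]
        congr 1; ext v
        rw [add_sub_cancel_right, sub_sub, add_comm v w]
        ring
    _ = c * ∫ u, f u := by rw [integral_mul_const, mul_comm]

theorem stmt_7_general (a A T : ℝ) (ha : 0 < a)
    (fX : ℝ → ℝ) (hfX_int : Integrable fX)
    (fε : ℝ → ℝ) (hfε : fε = Set.indicator (Set.Icc (-a) a) fun _ => 1 / (2 * a))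
    (fY : ℝ → ℝ) (hfY : ∀ x, fY x = ∫ u, fX (x - u) * fε u)
    (K : ℝ → ℝ) (hK : ContDiff ℝ 1 K)
    (hKsupp : Function.support K ⊆ Set.Icc (-A) A)
    (h : ℝ) (hh : 0 < h) (hha : A * h ≤ a)
    (s : ℤ → ℝ) (hs : ∀ k, s k = if 0 ≤ k then 1 else -1)
    (L : ℝ → ℝ)
    (hL : ∀ x, L x = h⁻¹ * ∑' k : ℤ, s k * deriv K ((x - (2 * (k : ℝ) + 1) * a) / h)) :
    (∫ t in (0 : ℝ)..T, ∫ u, (L (t - u)) ^ 2 * fY u)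
      = T * (∫ u, fX u) * (∫ x, (deriv K x) ^ 2) / (2 * a * h) := by
  have hp : 0 < 2 * a := by linarith
  have hK'_vanish : ∀ y, a ≤ |y| → deriv K (y / h) = 0 := fun y hy =>
    deriv_eq_zero_of_le_abs hK hKsupp (by rw [abs_div, abs_of_pos hh, le_div_iff₀ hh]; linarith)
  set F : ℝ → ℝ := fun x => h⁻¹ ^ 2 * deriv K ((toIcoMod hp 0 x - a) / h) ^ 2
  have hLF : ∀ x, L x ^ 2 = F x := fun x => by
    rw [hL, tsum_mul_translate_eq hp (g := fun y => deriv K (y / h)) hK'_vanish, hs]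
    split_ifs <;> ring
  have hK_cpt : HasCompactSupport K :=
    HasCompactSupport.intro isCompact_Icc fun x hx => Function.notMem_support.1 (hx ∘ (hKsupp ·))
  obtain ⟨C, hC⟩ := (hK.continuous_deriv le_rfl).bounded_above_of_compact_support hK_cpt.deriv
  have hF_bound : ∀ x, ‖F x‖ ≤ h⁻¹ ^ 2 * C ^ 2 := fun x => by
    simp only [F, norm_mul, norm_pow]
    gcongr
    · simp [abs_of_pos hh]
    · exact hC _
  have hF_meas : Measurable F :=
    measurable_const.mul (((hK.continuous_deriv le_rfl).measurable.comp
      (((measurable_toIcoMod_zero hp).sub_const a).div_const h)).pow_const 2)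
  have hconv : ∀ x, ∫ v, F (x - v) * fε v = (∫ x, deriv K x ^ 2) / (2 * a * h) := fun x => by
    rw [hfε]; exact integral_periodized_sq_mul_uniform hp hh hK'_vanish x
  have hfε_int : Integrable fε := by
    rw [hfε]
    exact (integrable_indicator_iff measurableSet_Icc).2 (integrableOn_const measure_Icc_lt_top.ne)
  simp_rw [hLF, hfY, integral_mul_convolution_eq_of_forall hF_meas hF_bound hfX_int hfε_int hconv,
    intervalIntegral.integral_const, smul_eq_mul, sub_zero]
  ring

/-- Variance identity (deterministic form of Lemma 1, second part): for `h > 0` with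
`Ah ≤ a`, `∫_0^T ∫_ℝ L_h(t−u)² f_Y(u) du dt = T ‖f_X‖₁ ‖K'‖₂² / (2ah)`. -/
theorem stmt_7 (a A T : ℝ) (ha : 0 < a) (hA : 0 < A) (hT : 0 < T)
    (fX : ℝ → ℝ) (hfX_pos : ∀ x, 0 ≤ fX x) (hfX_int : Integrable fX)
    (fε : ℝ → ℝ) (hfε : fε = Set.indicator (Set.Icc (-a) a) fun _ => 1 / (2 * a))
    (fY : ℝ → ℝ) (hfY : ∀ x, fY x = ∫ u, fX (x - u) * fε u)
    (K : ℝ → ℝ) (hK : ContDiff ℝ 1 K)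
    (hKsupp : Function.support K ⊆ Set.Icc (-A) A)
    (h : ℝ) (hh : 0 < h) (hha : A * h ≤ a)
    (s : ℤ → ℝ) (hs : ∀ k, s k = if 0 ≤ k then 1 else -1)
    (L : ℝ → ℝ)
    (hL : ∀ x, L x = h⁻¹ * ∑' k : ℤ, s k * deriv K ((x - (2 * (k : ℝ) + 1) * a) / h)) :
    (∫ t in (0 : ℝ)..T, ∫ u, (L (t - u)) ^ 2 * fY u)
      = T * (∫ u, fX u) * (∫ x, (deriv K x) ^ 2) / (2 * a * h) :=
  stmt_7_general a A T ha fX hfX_int fε hfε fY hfY K hK hKsupp h hh hha s hs L hL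
end

section
/- Let h > 0 satisfy Ah ≤ a. Then for every u ∈ ℝ, ∫_0^T L_h(t−u)² dt ≤ ‖K'‖₂² (T + 4a) / (2 a h). -/
open MeasureTheory Real

/-!
For `Ah ≤ a` the `k`-th term of `L_h` is supported in the open block `(2ka, 2(k+1)a)`, because
a continuous `K'` vanishes at `±A` as well. Hence at every point at most one term is nonzero and,
as `s_k² = 1`, `L_h²` is `h⁻²` times the sum of the squares of the terms. Each squared term
integrates to at most `h ‖K'‖₂²`, and a window of length `T` meets at most `T / (2a) + 2`
blocks.
-/

open Set Function

lemma support_deriv_subset_Ioo {K : ℝ → ℝ} {A : ℝ} (hK : Continuous (deriv K))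
    (hKsupp : support K ⊆ Icc (-A) A) : support (deriv K) ⊆ Ioo (-A) A := by
  rw [← interior_Icc]
  exact interior_maximal (support_deriv_subset.trans (closure_minimal hKsupp isClosed_Icc))
    hK.isOpen_support

lemma floor_div_eq_of_comp_ne_zero {φ : ℝ → ℝ} {a h A : ℝ} (ha : 0 < a) (hh : 0 < h)
    (hha : A * h ≤ a) (hφ : support φ ⊆ Ioo (-A) A) {k : ℤ} {x : ℝ}
    (hx : φ ((x - (2 * k + 1) * a) / h) ≠ 0) : ⌊x / (2 * a)⌋ = k := by
  obtain ⟨hlow, hupp⟩ := hφ hx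
  rw [lt_div_iff₀ hh] at hlow
  rw [div_lt_iff₀ hh] at hupp
  rw [Int.floor_eq_iff, le_div_iff₀ (by positivity), div_lt_iff₀ (by positivity)]
  constructor <;> linarith

lemma sq_tsum_eq_sum_sq {ι : Type*} {f s : ι → ℝ} (hs : ∀ i, s i ^ 2 = 1) {m : ι}
    (hf : ∀ i ≠ m, f i = 0) {F : Finset ι} (hm : m ∈ F) :
    (∑' i, s i * f i) ^ 2 = ∑ i ∈ F, f i ^ 2 := by
  rw [tsum_eq_single m fun i hi => by rw [hf i hi, mul_zero],
    Finset.sum_eq_single_of_mem m hm fun i _ hi => by rw [hf i hi, sq, mul_zero],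
    mul_pow, hs, one_mul]

lemma sq_tsum_eq_sum_sq_of_mem_Icc {φ : ℝ → ℝ} {s : ℤ → ℝ} (hs : ∀ k, s k ^ 2 = 1)
    {a h A : ℝ} (ha : 0 < a) (hh : 0 < h) (hha : A * h ≤ a) (hφ : support φ ⊆ Ioo (-A) A)
    {x y z : ℝ} (hx : x ∈ Icc y z) :
    (∑' k : ℤ, s k * φ ((x - (2 * k + 1) * a) / h)) ^ 2
      = ∑ k ∈ Finset.Icc ⌊y / (2 * a)⌋ ⌊z / (2 * a)⌋,
          φ ((x - (2 * k + 1) * a) / h) ^ 2 := by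
  refine sq_tsum_eq_sum_sq hs (m := ⌊x / (2 * a)⌋) (fun k hk => ?_) ?_
  · exact not_not.1 fun hne => hk (floor_div_eq_of_comp_ne_zero ha hh hha hφ hne).symm
  · exact Finset.mem_Icc.2 ⟨Int.floor_mono (by gcongr; exact hx.1),
      Int.floor_mono (by gcongr; exact hx.2)⟩

lemma card_Icc_floor_le {y z : ℝ} (hyz : y ≤ z) :
    ((Finset.Icc ⌊y⌋ ⌊z⌋).card : ℝ) ≤ z - y + 2 := by
  have hcard := Int.card_Icc_of_le ⌊y⌋ ⌊z⌋ (by linarith [Int.floor_mono hyz])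
  rw [show ((Finset.Icc ⌊y⌋ ⌊z⌋).card : ℝ) = ((⌊z⌋ + 1 - ⌊y⌋ : ℤ) : ℝ) from
    mod_cast hcard]
  push_cast
  linarith [Int.floor_le z, Int.sub_one_lt_floor y]

lemma intervalIntegral_comp_sub_div_le {g : ℝ → ℝ} (hg0 : 0 ≤ g) (hg : Integrable g)
    {h : ℝ} (hh : 0 < h) {t₀ t₁ : ℝ} (ht : t₀ ≤ t₁) (c : ℝ) :
    ∫ t in t₀..t₁, g ((t - c) / h) ≤ h * ∫ x, g x := by
  have hint : Integrable fun t => g ((t - c) / h) := (hg.comp_div hh.ne').comp_sub_right c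
  calc ∫ t in t₀..t₁, g ((t - c) / h) = ∫ t in Ioc t₀ t₁, g ((t - c) / h) :=
        intervalIntegral.integral_of_le ht
    _ ≤ ∫ t, g ((t - c) / h) :=
        setIntegral_le_integral hint (.of_forall fun t => hg0 ((t - c) / h))
    _ = h * ∫ x, g x := by
        rw [integral_sub_right_eq_self (fun t => g (t / h)) c, Measure.integral_comp_div,
          abs_of_pos hh, smul_eq_mul]

lemma Continuous.integrable_sq_of_support_subset_Icc {g : ℝ → ℝ} (hg : Continuous g)
    {b c : ℝ} (hgsupp : support g ⊆ Icc b c) : Integrable fun x => g x ^ 2 :=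
  (hg.pow 2).integrable_of_hasCompactSupport <|
    HasCompactSupport.intro (isCompact_Icc (a := b) (b := c)) fun x hx => by
      simp [notMem_support.1 fun hx' => hx (hgsupp hx')]

theorem stmt_8_general (a A T : ℝ) (ha : 0 < a) (hT : 0 < T)
    (K : ℝ → ℝ) (hK : ContDiff ℝ 1 K)
    (hKsupp : Function.support K ⊆ Set.Icc (-A) A)
    (h : ℝ) (hh : 0 < h) (hha : A * h ≤ a)
    (s : ℤ → ℝ) (hs : ∀ k, s k = if 0 ≤ k then 1 else -1)
    (L : ℝ → ℝ)
    (hL : ∀ x, L x = h⁻¹ * ∑' k : ℤ, s k * deriv K ((x - (2 * (k : ℝ) + 1) * a) / h)) :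
    ∀ u : ℝ, (∫ t in (0 : ℝ)..T, (L (t - u)) ^ 2)
      ≤ (∫ x, (deriv K x) ^ 2) * (T + 4 * a) / (2 * a * h) := by
  intro u
  have hK' : Continuous (deriv K) := hK.continuous_deriv le_rfl
  have hK'supp := support_deriv_subset_Ioo hK' hKsupp
  have hs2 : ∀ k, s k ^ 2 = 1 := fun k => by rw [hs]; split_ifs <;> norm_num
  set F := Finset.Icc ⌊-u / (2 * a)⌋ ⌊(T - u) / (2 * a)⌋
  have hL2 : ∀ t ∈ uIcc 0 T,
      L (t - u) ^ 2 = h⁻¹ ^ 2 * ∑ k ∈ F, deriv K ((t - u - (2 * k + 1) * a) / h) ^ 2 := by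
    intro t ht
    rw [uIcc_of_le hT.le] at ht
    rw [hL, mul_pow, sq_tsum_eq_sum_sq_of_mem_Icc hs2 ha hh hha hK'supp
      (show t - u ∈ Icc (-u) (T - u) from ⟨by linarith [ht.1], by linarith [ht.2]⟩)]
  have hcard : (F.card : ℝ) ≤ (T + 4 * a) / (2 * a) :=
    calc (F.card : ℝ) ≤ (T - u) / (2 * a) - -u / (2 * a) + 2 :=
          card_Icc_floor_le (by gcongr; linarith)
      _ = (T + 4 * a) / (2 * a) := by field_simp; ring
  set I := ∫ x, deriv K x ^ 2
  have hterm : ∀ k : ℤ, ∫ t in 0..T, deriv K ((t - u - (2 * k + 1) * a) / h) ^ 2 ≤ h * I :=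
    fun k => by
      simpa only [sub_sub] using intervalIntegral_comp_sub_div_le (fun _ => sq_nonneg _)
        (hK'.integrable_sq_of_support_subset_Icc (hK'supp.trans Ioo_subset_Icc_self)) hh
        hT.le (u + (2 * k + 1) * a)
  have hI : 0 ≤ I := integral_nonneg fun _ => sq_nonneg _
  calc ∫ t in 0..T, L (t - u) ^ 2
      = h⁻¹ ^ 2 * ∑ k ∈ F, ∫ t in 0..T, deriv K ((t - u - (2 * k + 1) * a) / h) ^ 2 := by
        rw [intervalIntegral.integral_congr hL2, intervalIntegral.integral_const_mul,
          intervalIntegral.integral_finsetSum fun k _ =>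
            (by fun_prop : Continuous _).intervalIntegrable _ _]
    _ ≤ h⁻¹ ^ 2 * (F.card * (h * I)) := by
        gcongr
        simpa using Finset.sum_le_card_nsmul F _ _ fun k _ => hterm k
    _ ≤ h⁻¹ ^ 2 * ((T + 4 * a) / (2 * a) * (h * I)) := by gcongr
    _ = I * (T + 4 * a) / (2 * a * h) := by field_simp

/-- For `h > 0` with `Ah ≤ a` and every `u ∈ ℝ`,
`∫_0^T L_h(t−u)² dt ≤ ‖K'‖₂² (T + 4a) / (2ah)`. -/
theorem stmt_8 (a A T : ℝ) (ha : 0 < a) (hA : 0 < A) (hT : 0 < T)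
    (K : ℝ → ℝ) (hK : ContDiff ℝ 1 K)
    (hKsupp : Function.support K ⊆ Set.Icc (-A) A)
    (h : ℝ) (hh : 0 < h) (hha : A * h ≤ a)
    (s : ℤ → ℝ) (hs : ∀ k, s k = if 0 ≤ k then 1 else -1)
    (L : ℝ → ℝ)
    (hL : ∀ x, L x = h⁻¹ * ∑' k : ℤ, s k * deriv K ((x - (2 * (k : ℝ) + 1) * a) / h)) :
    ∀ u : ℝ, (∫ t in (0 : ℝ)..T, (L (t - u)) ^ 2)
      ≤ (∫ x, (deriv K x) ^ 2) * (T + 4 * a) / (2 * a * h) :=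
  stmt_8_general a A T ha hT K hK hKsupp h hh hha s hs L hL
end

section
/- Let h > 0 satisfy Ah ≤ a. Then for every u ∈ ℝ, ∫_0^T |L_h(t−u)| dt ≤ ‖K'‖₁ (T + 4a) / (2a). -/
open MeasureTheory Real

/-!
Since `A h ≤ a`, the `k`-th term of `L_h (t - u)` vanishes unless `t - u ∈ [2ka, (2k+2)a]`.
For `t ∈ [0, T]` only the at most `T / (2a) + 2` integers `k` whose interval meets `[-u, T - u]`
contribute, and by the triangle inequality and a change of variables each of them contributes
at most `‖K'‖₁` to the integral.
-/

theorem card_Icc_ceil_floor_le {α β : ℝ} (hαβ : α ≤ β + 1) :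
    ((Finset.Icc ⌈α⌉ ⌊β⌋).card : ℝ) ≤ β - α + 1 := by
  rw [Int.card_Icc, ← Int.cast_natCast, Int.toNat_eq_max, Int.cast_max]
  push_cast
  have := Int.floor_le β
  have := Int.le_ceil α
  exact max_le (by linarith) (by linarith)

theorem mem_Icc_of_div_mem_Icc {a A h x : ℝ} {k : ℤ} (ha : 0 < a) (hh : 0 < h)
    (hha : A * h ≤ a) (hx : (x - (2 * k + 1) * a) / h ∈ Set.Icc (-A) A) :
    (k : ℝ) ∈ Set.Icc (x / (2 * a) - 1) (x / (2 * a)) := by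
  obtain ⟨hlo, hhi⟩ := hx
  rw [le_div_iff₀ hh] at hlo
  rw [div_le_iff₀ hh] at hhi
  constructor
  · rw [sub_le_iff_le_add, div_le_iff₀ (by positivity)]
    linarith
  · rw [le_div_iff₀ (by positivity)]
    linarith

theorem tsum_eq_sum_Icc_of_support_subset {g : ℝ → ℝ} {a A h : ℝ}
    (hg : Function.support g ⊆ Set.Icc (-A) A) (ha : 0 < a) (hh : 0 < h) (hha : A * h ≤ a)
    (w : ℤ → ℝ) {x y z : ℝ} (hyx : y ≤ x) (hxz : x ≤ z) :
    ∑' k : ℤ, w k * g ((x - (2 * (k : ℝ) + 1) * a) / h)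
      = ∑ k ∈ Finset.Icc ⌈y / (2 * a) - 1⌉ ⌊z / (2 * a)⌋,
          w k * g ((x - (2 * (k : ℝ) + 1) * a) / h) := by
  refine tsum_eq_sum fun k hk => ?_
  by_contra hne
  obtain ⟨hlo, hhi⟩ := mem_Icc_of_div_mem_Icc ha hh hha (hg (right_ne_zero_of_mul hne))
  refine hk (Finset.mem_Icc.mpr ⟨Int.ceil_le.mpr (le_trans ?_ hlo), Int.le_floor.mpr (hhi.trans ?_)⟩)
  all_goals gcongr

theorem integral_abs_comp_scale {f : ℝ → ℝ} {h : ℝ} (hh : 0 < h) (c : ℝ) :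
    ∫ t, |h⁻¹ * f ((t - c) / h)| = ∫ x, |f x| := by
  simp_rw [abs_mul, abs_of_pos (inv_pos.mpr hh)]
  rw [integral_const_mul, integral_sub_right_eq_self (fun t => |f (t / h)|) c,
    Measure.integral_comp_div (fun x => |f x|) h, abs_of_pos hh, smul_eq_mul,
    inv_mul_cancel_left₀ hh.ne']

theorem setIntegral_abs_sum_comp_scale_le {ι : Type*} {f : ℝ → ℝ} (hf : Integrable f)
    {h : ℝ} (hh : 0 < h) (F : Finset ι) {w : ι → ℝ} (hw : ∀ k, |w k| ≤ 1) (c : ι → ℝ)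
    (s : Set ℝ) :
    ∫ t in s, |h⁻¹ * ∑ k ∈ F, w k * f ((t - c k) / h)| ≤ F.card * ∫ x, |f x| := by
  have hint : ∀ k, Integrable fun t => |h⁻¹ * f ((t - c k) / h)| :=
    fun k => (((hf.comp_div hh.ne').comp_sub_right (c k)).const_mul h⁻¹).abs
  have hpointwise : ∀ t, |h⁻¹ * ∑ k ∈ F, w k * f ((t - c k) / h)|
      ≤ ∑ k ∈ F, |h⁻¹ * f ((t - c k) / h)| := fun t => by
    rw [Finset.mul_sum]
    refine (Finset.abs_sum_le_sum_abs _ _).trans (Finset.sum_le_sum fun k _ => ?_)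
    rw [mul_left_comm, abs_mul]
    exact mul_le_of_le_one_left (abs_nonneg _) (hw k)
  calc ∫ t in s, |h⁻¹ * ∑ k ∈ F, w k * f ((t - c k) / h)|
      ≤ ∫ t in s, ∑ k ∈ F, |h⁻¹ * f ((t - c k) / h)| :=
        integral_mono_of_nonneg (.of_forall fun _ => abs_nonneg _)
          (integrable_finsetSum F fun k _ => hint k).restrict (.of_forall hpointwise)
    _ = ∑ k ∈ F, ∫ t in s, |h⁻¹ * f ((t - c k) / h)| :=
        integral_finsetSum F fun k _ => (hint k).restrict
    _ ≤ ∑ k ∈ F, ∫ x, |f x| := Finset.sum_le_sum fun k _ =>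
        (setIntegral_le_integral (hint k) (.of_forall fun _ => abs_nonneg _)).trans_eq
          (integral_abs_comp_scale hh (c k))
    _ = F.card * ∫ x, |f x| := by rw [Finset.sum_const, nsmul_eq_mul]

theorem stmt_9_general (a A T : ℝ) (ha : 0 < a) (hT : 0 < T)
    (K : ℝ → ℝ) (hK : ContDiff ℝ 1 K)
    (hKsupp : Function.support K ⊆ Set.Icc (-A) A)
    (h : ℝ) (hh : 0 < h) (hha : A * h ≤ a)
    (s : ℤ → ℝ) (hs : ∀ k, s k = if 0 ≤ k then 1 else -1)
    (L : ℝ → ℝ)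
    (hL : ∀ x, L x = h⁻¹ * ∑' k : ℤ, s k * deriv K ((x - (2 * (k : ℝ) + 1) * a) / h)) :
    ∀ u : ℝ, (∫ t in (0 : ℝ)..T, |L (t - u)|)
      ≤ (∫ x, |deriv K x|) * (T + 4 * a) / (2 * a) := by
  intro u
  have htsupp : tsupport K ⊆ Set.Icc (-A) A := closure_minimal hKsupp isClosed_Icc
  have hK'supp : Function.support (deriv K) ⊆ Set.Icc (-A) A := support_deriv_subset.trans htsupp
  have hK'int : Integrable (deriv K) :=
    (hK.continuous_deriv le_rfl).integrable_of_hasCompactSupport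
      (HasCompactSupport.deriv (isCompact_Icc.of_isClosed_subset (isClosed_tsupport K) htsupp))
  set F := Finset.Icc ⌈-u / (2 * a) - 1⌉ ⌊(T - u) / (2 * a)⌋
  have hL_eq : ∀ t ∈ Set.Ioc 0 T,
      L (t - u) = h⁻¹ * ∑ k ∈ F, s k * deriv K ((t - u - (2 * (k : ℝ) + 1) * a) / h) :=
    fun t ht => by
      rw [hL, tsum_eq_sum_Icc_of_support_subset hK'supp ha hh hha s (y := -u) (z := T - u)
        (by linarith [ht.1]) (by linarith [ht.2])]
  have hs_abs : ∀ k, |s k| ≤ 1 := fun k => by rw [hs k]; split_ifs <;> norm_num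
  have hcard : (F.card : ℝ) ≤ T / (2 * a) + 2 := by
    refine (card_Icc_ceil_floor_le ?_).trans_eq ?_
    all_goals field_simp; linarith
  calc (∫ t in (0 : ℝ)..T, |L (t - u)|)
      = ∫ t in Set.Ioc 0 T,
          |h⁻¹ * ∑ k ∈ F, s k * deriv K ((t - u - (2 * (k : ℝ) + 1) * a) / h)| := by
        rw [intervalIntegral.integral_of_le hT.le]
        exact setIntegral_congr_fun measurableSet_Ioc fun t ht => by rw [hL_eq t ht]
    _ ≤ F.card * ∫ x, |deriv K x| := by
        simpa only [sub_sub] using setIntegral_abs_sum_comp_scale_le hK'int hh F hs_abs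
          (fun k : ℤ => u + (2 * (k : ℝ) + 1) * a) _
    _ ≤ (T / (2 * a) + 2) * ∫ x, |deriv K x| := by gcongr
    _ = (∫ x, |deriv K x|) * (T + 4 * a) / (2 * a) := by field_simp; ring

/-- For `h > 0` with `Ah ≤ a` and every `u ∈ ℝ`,
`∫_0^T |L_h(t−u)| dt ≤ ‖K'‖₁ (T + 4a) / (2a)`. -/
theorem stmt_9 (a A T : ℝ) (ha : 0 < a) (hA : 0 < A) (hT : 0 < T)
    (K : ℝ → ℝ) (hK : ContDiff ℝ 1 K)
    (hKsupp : Function.support K ⊆ Set.Icc (-A) A)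
    (h : ℝ) (hh : 0 < h) (hha : A * h ≤ a)
    (s : ℤ → ℝ) (hs : ∀ k, s k = if 0 ≤ k then 1 else -1)
    (L : ℝ → ℝ)
    (hL : ∀ x, L x = h⁻¹ * ∑' k : ℤ, s k * deriv K ((x - (2 * (k : ℝ) + 1) * a) / h)) :
    ∀ u : ℝ, (∫ t in (0 : ℝ)..T, |L (t - u)|)
      ≤ (∫ x, |deriv K x|) * (T + 4 * a) / (2 * a) :=
  stmt_9_general a A T ha hT K hK hKsupp h hh hha s hs L hL
end

section
/- (Birgé–Massart combinatorial lemma.) There exist absolute constants τ > 0 and σ > 0 with the following property: for every integer D ≥ 1 and every finite set Γ with |Γ| = D, there exists a family M of subsets of Γ such that log |M| ≥ σ D and such that for all distinct m, m' ∈ M, the symmetric difference satisfies |m Δ m'| ≥ τ D. -/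
/-!
Gilbert–Varshamov argument. Take a maximal family `M` of subsets of `Γ` whose pairwise symmetric
differences exceed `k`. By maximality the balls `{x | #(x ∆ m) ≤ k}`, `m ∈ M`, cover all `2 ^ D`
subsets, and each ball has as many points as `{y | #y ≤ k}`, whose size is at most
`(1 + x) ^ D / x ^ k` for every `0 < x ≤ 1` because `∑ y, x ^ #y = (1 + x) ^ D`. With `k = D / 8`
and `x = 1 / 7` this gives `log #M ≥ D (log 2 - log (8 / 7)) - (D / 8) log 7`, a positive
multiple of `D`.
-/

open Real Finset
open scoped symmDiff

variable {α : Type*}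

theorem Finset.exists_maximal_pairwise [Finite α] (r : α → α → Prop) [Std.Symm r] :
    ∃ M : Finset α, (M : Set α).Pairwise r ∧ ∀ x ∉ M, ∃ m ∈ M, ¬ r x m := by
  classical
  obtain ⟨M, hM, hmax⟩ := (Set.toFinite {M : Finset α | (M : Set α).Pairwise r}).exists_maximal
    ⟨∅, by simp⟩
  refine ⟨M, hM, fun x hx => ?_⟩
  by_contra! hfar
  have hins : (↑(insert x M) : Set α).Pairwise r := by
    rw [coe_insert, Set.pairwise_insert_of_symm]
    exact ⟨hM, fun m hm _ => hfar m hm⟩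
  exact hx (hmax hins (subset_insert x M) (mem_insert_self x M))

section Fintype

variable [Fintype α]

theorem pow_mul_card_filter_card_le_le_one_add_pow {x : ℝ} (hx₀ : 0 ≤ x) (hx₁ : x ≤ 1) (k : ℕ) :
    x ^ k * #{y : Finset α | #y ≤ k} ≤ (1 + x) ^ Fintype.card α := by
  calc x ^ k * #{y : Finset α | #y ≤ k} = ∑ y : Finset α with #y ≤ k, x ^ k := by
        rw [sum_const, nsmul_eq_mul, mul_comm]
    _ ≤ ∑ y : Finset α with #y ≤ k, x ^ #y :=
        sum_le_sum fun y hy => pow_le_pow_of_le_one hx₀ hx₁ (mem_filter.1 hy).2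
    _ ≤ ∑ y : Finset α, x ^ #y :=
        sum_le_sum_of_subset_of_nonneg (filter_subset _ _) fun _ _ _ => by positivity
    _ = (1 + x) ^ Fintype.card α := by
        simpa [add_comm] using sum_pow_mul_eq_add_pow x 1 (univ : Finset α)

variable [DecidableEq α]

theorem card_filter_card_symmDiff_le_eq (m : Finset α) (k : ℕ) :
    #{x : Finset α | #(x ∆ m) ≤ k} = #{y : Finset α | #y ≤ k} :=
  card_bij' (fun x _ => x ∆ m) (fun y _ => y ∆ m) (by simp) (by simp)
    (fun _ _ => symmDiff_symmDiff_cancel_right _ _) (fun _ _ => symmDiff_symmDiff_cancel_right _ _)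

theorem two_pow_card_le_card_mul_card_filter_card_le {M : Finset (Finset α)} {k : ℕ}
    (hM : ∀ x, ∃ m ∈ M, #(x ∆ m) ≤ k) :
    2 ^ Fintype.card α ≤ #M * #{y : Finset α | #y ≤ k} := by
  calc 2 ^ Fintype.card α = #(univ : Finset (Finset α)) := by simp
    _ ≤ #(M.biUnion fun m => {x : Finset α | #(x ∆ m) ≤ k}) :=
      card_le_card fun x _ => by simpa using hM x
    _ ≤ ∑ m ∈ M, #{x : Finset α | #(x ∆ m) ≤ k} := card_biUnion_le
    _ = #M * #{y : Finset α | #y ≤ k} := by simp [card_filter_card_symmDiff_le_eq]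

theorem exists_pairwise_lt_card_symmDiff (k : ℕ) {x : ℝ} (hx₀ : 0 ≤ x) (hx₁ : x ≤ 1) :
    ∃ M : Finset (Finset α), (M : Set (Finset α)).Pairwise (fun m m' => k < #(m ∆ m')) ∧
      x ^ k * 2 ^ Fintype.card α ≤ (1 + x) ^ Fintype.card α * #M := by
  have : Std.Symm fun m m' : Finset α => k < #(m ∆ m') :=
    ⟨fun m m' => by rw [symmDiff_comm]; exact id⟩
  obtain ⟨M, hsep, hmax⟩ := exists_maximal_pairwise fun m m' : Finset α => k < #(m ∆ m')
  have hcover : ∀ s, ∃ m ∈ M, #(s ∆ m) ≤ k := fun s => by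
    by_cases hs : s ∈ M
    · exact ⟨s, hs, by simp⟩
    · simpa using hmax s hs
  refine ⟨M, hsep, ?_⟩
  calc x ^ k * 2 ^ Fintype.card α ≤ x ^ k * (#M * #{y : Finset α | #y ≤ k}) := by
        gcongr; exact_mod_cast two_pow_card_le_card_mul_card_filter_card_le hcover
    _ = #M * (x ^ k * #{y : Finset α | #y ≤ k}) := by ring
    _ ≤ #M * (1 + x) ^ Fintype.card α := by
        gcongr; exact pow_mul_card_filter_card_le_le_one_add_pow hx₀ hx₁ k
    _ = (1 + x) ^ Fintype.card α * #M := mul_comm _ _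

end Fintype

/-- Birgé–Massart combinatorial lemma: there are absolute constants `τ, σ > 0` such that
for every finite set `Γ` of cardinality `D ≥ 1` there is a family `M` of subsets of `Γ`
with `log |M| ≥ σ D` and `|m Δ m'| ≥ τ D` for all distinct `m, m' ∈ M`. -/
theorem stmt_13 :
    ∃ τ : ℝ, 0 < τ ∧ ∃ σ : ℝ, 0 < σ ∧
      ∀ (D : ℕ), 1 ≤ D → ∀ (Γ : Type) [Fintype Γ] [DecidableEq Γ],
        Fintype.card Γ = D →
          ∃ M : Finset (Finset Γ),
            σ * D ≤ Real.log M.card ∧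
              ∀ m ∈ M, ∀ m' ∈ M, m ≠ m' → τ * D ≤ ((symmDiff m m').card : ℝ) := by
  refine ⟨1 / 8, by norm_num, (7 * log 7 - 16 * log 2) / 8, ?_, ?_⟩
  · have h := log_lt_log (by norm_num) (show (2 : ℝ) ^ 16 < 7 ^ 7 by norm_num)
    rw [log_pow, log_pow] at h
    push_cast at h
    linarith
  intro D _ Γ _ _ hΓ
  obtain ⟨M, hsep, hM⟩ :=
    exists_pairwise_lt_card_symmDiff (α := Γ) (D / 8) (x := 1 / 7) (by norm_num) (by norm_num)
  rw [hΓ] at hM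
  refine ⟨M, ?_, fun m hm m' hm' hne => ?_⟩
  · have hpos : 0 < (1 / 7 : ℝ) ^ (D / 8) * 2 ^ D := by positivity
    have hM₀ : (#M : ℝ) ≠ 0 := fun h => by rw [h, mul_zero] at hM; linarith
    have hlog := log_le_log hpos hM
    rw [log_mul (by positivity) (by positivity), log_mul (by positivity) hM₀, log_pow, log_pow,
      log_pow, one_div, log_inv, show (1 : ℝ) + 7⁻¹ = 2 ^ 3 / 7 by norm_num,
      log_div (by norm_num) (by norm_num), log_pow] at hlog
    have hk : (8 * (D / 8 : ℕ) : ℝ) ≤ D := by exact_mod_cast Nat.mul_div_le D 8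
    have hk_log := mul_le_mul_of_nonneg_right hk (log_nonneg (show (1 : ℝ) ≤ 7 by norm_num))
    push_cast at hlog
    linarith
  · have hD : D < 8 * #(m ∆ m') := by have := hsep hm hm' hne; omega
    have hD' : (D : ℝ) < 8 * #(m ∆ m') := by exact_mod_cast hD
    linarith
end

section
/- There exists a constant C > 0 depending only on β and c_ψ such that for every j ∈ ℕ, every α ∈ ℝ, and every finite set m ⊆ ℤ, the function g = α Σ_{k∈m} ψ_{jk} satisfies ∫_ℝ |g^*(ξ)|² (1 + ξ²)^β dξ ≤ C α² 2^{2jβ} |m|, for any fixed β > 0. -/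
/-!
With `c = 2^j`, dilating and translating `ψ` gives
`g^*(ξ) = α 2^{j/2} c⁻¹ S(ξ/c) ψ^*(ξ/c)` where `S(η) = ∑_{k ∈ m} e^{ikη}`. Since `ψ^*` vanishes
outside `[-3π, 3π]`, the integrand is supported in `|ξ| ≤ 3πc`, where the weight is at most
`(1 + (3π)²)^β c^{2β}`. Bounding `|ψ^*|` by `c_ψ`, what remains is
`α² c⁻¹ c_ψ² ∫_{-3πc}^{3πc} |S(ξ/c)|² dξ = 6π α² c_ψ² |m|`, by orthogonality of the characters
`e^{ikη}` over `[-3π, 3π]`.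
-/

open MeasureTheory Real

/-- The paper's normalisation `g^*(ξ) = ∫ e^{ixξ} g(x) dx`, unlike `Real.fourierIntegral`. -/
noncomputable def fourierStar (g : ℝ → ℂ) (ξ : ℝ) : ℂ :=
  ∫ x : ℝ, Complex.exp (Complex.I * x * ξ) * g x

noncomputable def trigSum (m : Finset ℤ) (η : ℝ) : ℂ :=
  ∑ k ∈ m, Complex.exp (Complex.I * k * η)

section FourierStar

variable {g : ℝ → ℂ}

theorem integrable_exp_mul (hg : Integrable g) (ξ : ℝ) :
    Integrable fun x : ℝ => Complex.exp (Complex.I * x * ξ) * g x :=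
  hg.bdd_mul (c := 1) (Continuous.aestronglyMeasurable (by fun_prop))
    (ae_of_all _ fun x => by simp [Complex.norm_exp])

theorem MeasureTheory.Integrable.comp_mul_sub {c : ℝ} (hg : Integrable g) (hc : c ≠ 0) (k : ℝ) :
    Integrable fun x => g (c * x - k) :=
  (integrable_comp_mul_left_iff (fun y => g (y - k)) hc).mpr (hg.comp_sub_right k)

theorem fourierStar_const_mul (a : ℂ) (g : ℝ → ℂ) (ξ : ℝ) :
    fourierStar (fun x => a * g x) ξ = a * fourierStar g ξ := by
  simp only [fourierStar, ← integral_const_mul, mul_left_comm]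

theorem fourierStar_comp_mul_sub (g : ℝ → ℂ) {c : ℝ} (hc : 0 < c) (k ξ : ℝ) :
    fourierStar (fun x => g (c * x - k)) ξ
      = c⁻¹ * Complex.exp (Complex.I * k * (ξ / c : ℝ)) * fourierStar g (ξ / c) := by
  have hc' : (c : ℂ) ≠ 0 := by exact_mod_cast hc.ne'
  set G : ℝ → ℂ := fun z => Complex.exp (Complex.I * ((z + k) / c : ℝ) * ξ) * g z
  calc fourierStar (fun x => g (c * x - k)) ξ
      = ∫ x : ℝ, G (c * x - k) := by
        unfold fourierStar G
        refine integral_congr_ae (.of_forall fun x => ?_)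
        push_cast
        rw [sub_add_cancel, mul_div_cancel_left₀ _ hc']
    _ = c⁻¹ * ∫ y : ℝ, G y := by
        rw [Measure.integral_comp_mul_left (fun y => G (y - k)), integral_sub_right_eq_self,
          abs_of_pos (inv_pos.mpr hc), Complex.real_smul]
    _ = _ := by
        rw [mul_assoc]
        congr 1
        rw [fourierStar, ← integral_const_mul]
        refine integral_congr_ae (.of_forall fun z => ?_)
        simp only [G, ← mul_assoc, ← Complex.exp_add]
        push_cast
        ring_nf

theorem fourierStar_sum_comp_mul_sub (hg : Integrable g) {c : ℝ} (hc : 0 < c) (m : Finset ℤ)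
    (ξ : ℝ) :
    fourierStar (fun x => ∑ k ∈ m, g (c * x - k)) ξ
      = c⁻¹ * trigSum m (ξ / c) * fourierStar g (ξ / c) := by
  have hint : ∀ k ∈ m, Integrable fun x : ℝ =>
      Complex.exp (Complex.I * x * ξ) * g (c * x - k) :=
    fun k _ => integrable_exp_mul (hg.comp_mul_sub hc.ne' k) ξ
  calc fourierStar (fun x => ∑ k ∈ m, g (c * x - k)) ξ
      = ∑ k ∈ m, fourierStar (fun x => g (c * x - k)) ξ := by
        simp only [fourierStar, Finset.mul_sum]
        exact integral_finsetSum m hint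
    _ = _ := by
        simp only [fourierStar_comp_mul_sub g hc, trigSum, Complex.ofReal_intCast, Finset.mul_sum,
          Finset.sum_mul]

end FourierStar

@[fun_prop]
theorem continuous_trigSum (m : Finset ℤ) : Continuous (trigSum m) := by
  unfold trigSum
  fun_prop

theorem norm_trigSum_sq (m : Finset ℤ) (η : ℝ) :
    ‖trigSum m η‖ ^ 2 = ∑ k ∈ m, ∑ l ∈ m, cos (((k - l : ℤ) : ℝ) * η) := by
  rw [Complex.sq_norm, ← Complex.ofReal_re (Complex.normSq _), ← Complex.mul_conj, trigSum,
    map_sum, Finset.sum_mul_sum, Complex.re_sum]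
  refine Finset.sum_congr rfl fun k _ => ?_
  rw [Complex.re_sum]
  refine Finset.sum_congr rfl fun l _ => ?_
  rw [← Complex.exp_conj, ← Complex.exp_add, ← Complex.exp_ofReal_mul_I_re]
  congr 2
  simp only [map_mul, Complex.conj_I, Complex.conj_ofReal, map_intCast]
  push_cast
  ring

theorem integral_cos_int_mul (N : ℕ) (n : ℤ) :
    ∫ η in -(N * π)..(N * π), cos (n * η) = if n = 0 then 2 * N * π else 0 := by
  split_ifs with hn
  · simp only [hn, Int.cast_zero, zero_mul, cos_zero, intervalIntegral.integral_const,
      sub_neg_eq_add, smul_eq_mul, mul_one]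
    ring
  · have hn' : (n : ℝ) ≠ 0 := Int.cast_ne_zero.mpr hn
    have hsin : sin (n * (N * π)) = 0 := by
      rw [← mul_assoc]
      exact_mod_cast sin_int_mul_pi (n * N)
    rw [intervalIntegral.integral_comp_mul_left (f := cos) hn', integral_cos, mul_neg, sin_neg,
      hsin]
    simp

theorem integral_norm_trigSum_sq (N : ℕ) (m : Finset ℤ) :
    ∫ η in -(N * π)..(N * π), ‖trigSum m η‖ ^ 2 = 2 * N * π * m.card := by
  simp only [norm_trigSum_sq]
  have integral_sum (f : ℤ → ℝ → ℝ) (hf : ∀ k, Continuous (f k)) (s : Finset ℤ) :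
      ∫ η in -(N * π)..(N * π), ∑ k ∈ s, f k η = ∑ k ∈ s, ∫ η in -(N * π)..(N * π), f k η :=
    intervalIntegral.integral_finsetSum fun k _ => (hf k).intervalIntegrable _ _
  rw [integral_sum _ fun k => by fun_prop, Finset.sum_congr rfl fun k _ =>
    integral_sum (fun l η => cos (((k - l : ℤ) : ℝ) * η)) (fun l => by fun_prop) m]
  simp only [integral_cos_int_mul, sub_eq_zero, Finset.sum_ite_eq, Finset.sum_ite_mem,
    Finset.inter_self, Finset.sum_const, nsmul_eq_mul]
  ring

theorem integral_norm_trigSum_div_sq (N : ℕ) (m : Finset ℤ) {c : ℝ} (hc : 0 < c) :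
    ∫ ξ in -(N * π * c)..(N * π * c), ‖trigSum m (ξ / c)‖ ^ 2 = 2 * N * π * c * m.card := by
  rw [intervalIntegral.integral_comp_div (fun η => ‖trigSum m η‖ ^ 2) hc.ne', neg_div,
    mul_div_cancel_right₀ _ hc.ne', integral_norm_trigSum_sq, smul_eq_mul]
  ring

theorem integral_mul_one_add_sq_rpow_le {f h : ℝ → ℝ} {β R : ℝ} (hβ : 0 ≤ β) (hR : 0 ≤ R)
    (hf : ∀ ξ, 0 ≤ f ξ) (hfh : ∀ ξ, f ξ ≤ h ξ) (hsupp : ∀ ξ ∉ Set.Icc (-R) R, f ξ = 0)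
    (hh : IntervalIntegrable h volume (-R) R) :
    ∫ ξ, f ξ * (1 + ξ ^ 2) ^ β ≤ (1 + R ^ 2) ^ β * ∫ ξ in -R..R, h ξ := by
  have hdom : ∀ ξ, f ξ * (1 + ξ ^ 2) ^ β ≤
      (Set.Icc (-R) R).indicator (fun ξ => (1 + R ^ 2) ^ β * h ξ) ξ := by
    intro ξ
    by_cases hξ : ξ ∈ Set.Icc (-R) R
    · rw [Set.indicator_of_mem hξ, mul_comm]
      have : ξ ^ 2 ≤ R ^ 2 := sq_le_sq' hξ.1 hξ.2
      exact mul_le_mul (by gcongr) (hfh ξ) (hf ξ) (by positivity)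
    · rw [Set.indicator_of_notMem hξ, hsupp ξ hξ, zero_mul]
  have hint : Integrable ((Set.Icc (-R) R).indicator fun ξ => (1 + R ^ 2) ^ β * h ξ) := by
    rw [integrable_indicator_iff measurableSet_Icc]
    exact ((intervalIntegrable_iff_integrableOn_Icc_of_le (by linarith)).mp hh).const_mul _
  calc ∫ ξ, f ξ * (1 + ξ ^ 2) ^ β
      ≤ ∫ ξ, (Set.Icc (-R) R).indicator (fun ξ => (1 + R ^ 2) ^ β * h ξ) ξ :=
        integral_mono_of_nonneg (ae_of_all _ fun ξ => by have := hf ξ; positivity) hint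
          (ae_of_all _ hdom)
    _ = _ := by
      rw [integral_indicator measurableSet_Icc, integral_Icc_eq_integral_Ioc,
        ← intervalIntegral.integral_of_le (by linarith), intervalIntegral.integral_const_mul]

theorem one_add_mul_sq_rpow_le {β c : ℝ} (hβ : 0 ≤ β) (hc : 1 ≤ c) (a : ℝ) :
    (1 + (a * c) ^ 2) ^ β ≤ (1 + a ^ 2) ^ β * (c ^ 2) ^ β := by
  rw [← mul_rpow (by positivity) (by positivity)]
  have : 1 ≤ c ^ 2 := one_le_pow₀ hc
  gcongr
  nlinarith


/-- `α ∑_{k ∈ m} ψ_{jk}` with `ψ_{jk}(x) = 2^{j/2} ψ(2^j x - k)`. -/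
noncomputable def waveletSum (ψ : ℝ → ℝ) (j : ℕ) (α : ℝ) (m : Finset ℤ) (x : ℝ) : ℝ :=
  α * ∑ k ∈ m, (2 : ℝ) ^ ((j : ℝ) / 2) * ψ (2 ^ j * x - k)

theorem norm_fourierStar_waveletSum_sq {ψ : ℝ → ℝ} (hψ : Integrable ψ) (j : ℕ) (α : ℝ)
    (m : Finset ℤ) (ξ : ℝ) :
    ‖fourierStar (fun x => (waveletSum ψ j α m x : ℂ)) ξ‖ ^ 2
      = α ^ 2 / 2 ^ j * (‖trigSum m (ξ / 2 ^ j)‖ ^ 2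
          * ‖fourierStar (fun x => (ψ x : ℂ)) (ξ / 2 ^ j)‖ ^ 2) := by
  have hsum : (fun x => (waveletSum ψ j α m x : ℂ))
      = fun x => ((α * 2 ^ ((j : ℝ) / 2) : ℝ) : ℂ) * ∑ k ∈ m, (ψ (2 ^ j * x - k) : ℂ) := by
    ext x
    push_cast [waveletSum]
    rw [Finset.mul_sum, Finset.mul_sum]
    exact Finset.sum_congr rfl fun k _ => by ring
  have hsq : ((2 : ℝ) ^ ((j : ℝ) / 2)) ^ 2 = 2 ^ j := by
    rw [← rpow_natCast, ← rpow_mul (by norm_num)]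
    norm_num
  rw [hsum, fourierStar_const_mul,
    fourierStar_sum_comp_mul_sub (g := fun x => (ψ x : ℂ)) hψ.ofReal (by positivity)]
  simp only [norm_mul, Complex.norm_real, norm_inv, Real.norm_eq_abs, mul_pow, sq_abs, hsq,
    abs_of_pos (by positivity : (0 : ℝ) < 2 ^ j)]
  field_simp

theorem div_notMem_Icc_union_Icc {ξ c : ℝ} (hc : 0 < c)
    (hξ : ξ ∉ Set.Icc (-(3 * π * c)) (3 * π * c)) :
    ξ / c ∉ Set.Icc (-(8 * π / 3)) (-(2 * π / 3)) ∪ Set.Icc (2 * π / 3) (8 * π / 3) := by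
  have hsub : Set.Icc (-(8 * π / 3)) (-(2 * π / 3)) ∪ Set.Icc (2 * π / 3) (8 * π / 3)
      ⊆ Set.Icc (-(3 * π)) (3 * π) :=
    Set.union_subset (Set.Icc_subset_Icc (by linarith [pi_pos]) (by linarith [pi_pos]))
      (Set.Icc_subset_Icc (by linarith [pi_pos]) (by linarith [pi_pos]))
  refine fun h => hξ ?_
  have := hsub h
  rwa [Set.mem_Icc, le_div_iff₀ hc, div_le_iff₀ hc, neg_mul] at this

/-- There is a constant `C > 0` depending only on `β` and `c_ψ` such that for every
Meyer-type wavelet `ψ` (Fourier transform bounded by `c_ψ` and supported in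
`[−8π/3,−2π/3] ∪ [2π/3,8π/3]`), every `j ∈ ℕ`, `α ∈ ℝ` and finite `m ⊆ ℤ`, the function
`g = α Σ_{k∈m} ψ_{jk}` satisfies `∫ |g^*(ξ)|² (1+ξ²)^β dξ ≤ C α² 2^{2jβ} |m|`. -/
theorem stmt_15 (β cψ : ℝ) (hβ : 0 < β) (hcψ : 0 < cψ) :
    ∃ C : ℝ, 0 < C ∧
      ∀ ψ : ℝ → ℝ, Integrable ψ → MemLp ψ 2 →
        (∀ ξ : ℝ, ‖∫ x : ℝ, Complex.exp (Complex.I * x * ξ) * (ψ x : ℂ)‖ ≤ cψ) →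
        (∀ ξ : ℝ,
          ξ ∉ Set.Icc (-(8 * π / 3)) (-(2 * π / 3)) ∪ Set.Icc (2 * π / 3) (8 * π / 3) →
            (∫ x : ℝ, Complex.exp (Complex.I * x * ξ) * (ψ x : ℂ)) = 0) →
        ∀ (j : ℕ) (α : ℝ) (m : Finset ℤ),
          (∫ ξ : ℝ,
              ‖∫ x : ℝ, Complex.exp (Complex.I * x * ξ) *
                  ((α * ∑ k ∈ m, (2 : ℝ) ^ ((j : ℝ) / 2) * ψ (2 ^ j * x - k) : ℝ) : ℂ)‖ ^ 2
                * (1 + ξ ^ 2) ^ β)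
            ≤ C * α ^ 2 * (2 : ℝ) ^ (2 * (j : ℝ) * β) * m.card := by
  refine ⟨6 * π * (1 + (3 * π) ^ 2) ^ β * cψ ^ 2, by positivity, ?_⟩
  intro ψ hψ _ hbdd hsupp j α m
  have hc : (0 : ℝ) < 2 ^ j := by positivity
  have hdom (ξ : ℝ) : ‖fourierStar (fun x => (waveletSum ψ j α m x : ℂ)) ξ‖ ^ 2
      ≤ α ^ 2 / 2 ^ j * cψ ^ 2 * ‖trigSum m (ξ / 2 ^ j)‖ ^ 2 := by
    rw [norm_fourierStar_waveletSum_sq hψ, mul_assoc, mul_comm (cψ ^ 2)]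
    gcongr
    exact hbdd _
  have hvanish (ξ : ℝ) (hξ : ξ ∉ Set.Icc (-(3 * π * 2 ^ j)) (3 * π * 2 ^ j)) :
      ‖fourierStar (fun x => (waveletSum ψ j α m x : ℂ)) ξ‖ ^ 2 = 0 := by
    rw [norm_fourierStar_waveletSum_sq hψ, show fourierStar (fun x => (ψ x : ℂ)) (ξ / 2 ^ j) = 0
      from hsupp _ (div_notMem_Icc_union_Icc hc hξ)]
    simp
  have hpow : (((2 : ℝ) ^ j) ^ 2) ^ β = 2 ^ (2 * (j : ℝ) * β) := by
    rw [← pow_mul, ← rpow_natCast, ← rpow_mul (by norm_num)]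
    push_cast
    ring_nf
  have htrig : ∫ ξ in -(3 * π * 2 ^ j)..(3 * π * 2 ^ j), ‖trigSum m (ξ / 2 ^ j)‖ ^ 2
      = 2 * 3 * π * 2 ^ j * m.card := by
    exact_mod_cast integral_norm_trigSum_div_sq 3 m hc
  calc _ ≤ (1 + (3 * π * 2 ^ j) ^ 2) ^ β * ∫ ξ in -(3 * π * 2 ^ j)..(3 * π * 2 ^ j),
          α ^ 2 / 2 ^ j * cψ ^ 2 * ‖trigSum m (ξ / 2 ^ j)‖ ^ 2 :=
        integral_mul_one_add_sq_rpow_le hβ.le (by positivity) (fun _ => by positivity) hdom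
          hvanish ((by fun_prop : Continuous _).intervalIntegrable _ _)
    _ = (1 + (3 * π * 2 ^ j) ^ 2) ^ β * (6 * π * cψ ^ 2 * α ^ 2 * m.card) := by
        rw [intervalIntegral.integral_const_mul, htrig]
        field_simp
        ring
    _ ≤ (1 + (3 * π) ^ 2) ^ β * (((2 : ℝ) ^ j) ^ 2) ^ β * (6 * π * cψ ^ 2 * α ^ 2 * m.card) := by
        gcongr
        exact one_add_mul_sq_rpow_le hβ.le (one_le_pow₀ (by norm_num)) _
    _ = _ := by
        rw [hpow]
        ring
end

section
/- For every T ≥ 1 and c_ψ > 0 there exists a constant C̄ depending only on T and c_ψ with the following property: for every integer j ≥ 1, every function ψ : ℝ → ℝ with |ψ(x)| ≤ c_ψ (1+|x|)^{−2} for all x, every finite set m of integers with m ⊆ {0, 1, …, ⌈T 2^{j−1}⌉ − 1}, and every x ∈ ℝ, (1 + x²) | Σ_{k∈m} ψ(2^j x − k) | ≤ C̄. -/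
/-!
Write `(1 + x²) |Σ|` as `|Σ| + x² |Σ|`, where `Σ = Σ_{k ∈ m} ψ(2ʲx - k)`. Uniformly in `y`,
`Σ_{k ∈ ℤ} (1 + |y - k|)⁻² ≤ 4`: the integers `k ≤ ⌊y⌋` have distinct distances
`⌊y⌋ - k ≤ |y - k|`, those `k > ⌊y⌋` distinct distances `k - ⌊y⌋ - 1 ≤ |y - k|`, and each side
contributes at most `Σ_{d ≥ 1} d⁻² ≤ 2`. Hence `|Σ| ≤ 4 c_ψ`, and `x² |Σ| ≤ 16 T² c_ψ` when
`|x| ≤ 2T`. When `|x| > 2T`, every `k < T 2^{j-1}` satisfies `|2ʲx - k| ≥ 2^{j-1} |x|`, so each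
of the at most `2T 2^{j-1}` terms is at most `c_ψ / (2^{j-1} x)²` and `x² |Σ| ≤ 2T c_ψ`.
-/

open Finset

theorem sum_inv_one_add_sq_le_two (s : Finset ℕ) : ∑ d ∈ s, ((1 + d : ℝ) ^ 2)⁻¹ ≤ 2 := by
  obtain ⟨N, hN⟩ := s.exists_nat_subset_range
  calc ∑ d ∈ s, ((1 + d : ℝ) ^ 2)⁻¹ = ∑ i ∈ s.map (addLeftEmbedding 1), ((i : ℝ) ^ 2)⁻¹ := by
        simp [sum_map]
    _ ≤ ∑ i ∈ Ioo 0 (N + 1), ((i : ℝ) ^ 2)⁻¹ := by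
        refine sum_le_sum_of_subset_of_nonneg ?_ fun _ _ _ => by positivity
        intro i hi
        obtain ⟨d, hd, rfl⟩ := mem_map.1 hi
        have := mem_range.1 (hN hd)
        simp only [mem_Ioo, addLeftEmbedding_apply]
        omega
    _ ≤ 2 := by simpa using sum_Ioo_inv_sq_le (α := ℝ) 0 (N + 1)

theorem sum_inv_one_add_sq_le_two_of_injOn {ι : Type*} {s : Finset ι} {a : ι → ℝ} (e : ι → ℕ)
    (he : Set.InjOn e s) (hle : ∀ i ∈ s, (e i : ℝ) ≤ a i) :
    ∑ i ∈ s, ((1 + a i) ^ 2)⁻¹ ≤ 2 :=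
  calc ∑ i ∈ s, ((1 + a i) ^ 2)⁻¹ ≤ ∑ i ∈ s, ((1 + e i : ℝ) ^ 2)⁻¹ :=
        sum_le_sum fun i hi => by gcongr; exact hle i hi
    _ = ∑ d ∈ s.image e, ((1 + d : ℝ) ^ 2)⁻¹ :=
        (sum_image (f := fun d : ℕ => ((1 + d : ℝ) ^ 2)⁻¹) he).symm
    _ ≤ 2 := sum_inv_one_add_sq_le_two _

theorem sum_inv_one_add_abs_sub_sq_le_four (y : ℝ) (s : Finset ℤ) :
    ∑ k ∈ s, ((1 + |y - k|) ^ 2)⁻¹ ≤ 4 := by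
  set n := ⌊y⌋
  have hny : (n : ℝ) ≤ y := Int.floor_le y
  have hyn : y < n + 1 := Int.lt_floor_add_one y
  rw [← sum_filter_add_sum_filter_not s (· ≤ n)]
  have below : ∑ k ∈ s.filter (· ≤ n), ((1 + |y - k|) ^ 2)⁻¹ ≤ 2 := by
    refine sum_inv_one_add_sq_le_two_of_injOn (fun k => (n - k).natAbs) ?_ fun k hk => ?_
    · intro k hk l hl h
      simp only [coe_filter, Set.mem_ofPred_eq] at hk hl h
      omega
    · have hkn : (k : ℝ) ≤ n := by exact_mod_cast (mem_filter.1 hk).2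
      rw [Nat.cast_natAbs, Int.cast_abs, Int.cast_sub, abs_of_nonneg (by linarith),
        abs_of_nonneg (by linarith)]
      linarith
  have above : ∑ k ∈ s.filter (¬ · ≤ n), ((1 + |y - k|) ^ 2)⁻¹ ≤ 2 := by
    refine sum_inv_one_add_sq_le_two_of_injOn (fun k => (k - n - 1).natAbs) ?_ fun k hk => ?_
    · intro k hk l hl h
      simp only [coe_filter, Set.mem_ofPred_eq] at hk hl h
      omega
    · have hnk : (n : ℝ) + 1 ≤ k := by
        exact_mod_cast Int.lt_iff_add_one_le.1 (not_le.1 (mem_filter.1 hk).2)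
      rw [Nat.cast_natAbs, Int.cast_abs, Int.cast_sub, Int.cast_sub, Int.cast_one,
        abs_of_nonneg (by linarith), abs_of_nonpos (by linarith)]
      linarith
  linarith

section Decay

variable {ψ : ℝ → ℝ} {c : ℝ}

theorem nonneg_of_abs_le_div_one_add_sq (hψ : ∀ x, |ψ x| ≤ c / (1 + |x|) ^ 2) : 0 ≤ c := by
  simpa using (abs_nonneg _).trans (hψ 0)

theorem abs_sum_comp_sub_le (hψ : ∀ x, |ψ x| ≤ c / (1 + |x|) ^ 2) (y : ℝ) (s : Finset ℤ) :
    |∑ k ∈ s, ψ (y - k)| ≤ 4 * c :=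
  calc |∑ k ∈ s, ψ (y - k)| ≤ ∑ k ∈ s, c * ((1 + |y - k|) ^ 2)⁻¹ :=
        (abs_sum_le_sum_abs _ _).trans (sum_le_sum fun k _ => hψ _)
    _ = c * ∑ k ∈ s, ((1 + |y - k|) ^ 2)⁻¹ := (mul_sum _ _ _).symm
    _ ≤ c * 4 := by
        gcongr
        · exact nonneg_of_abs_le_div_one_add_sq hψ
        · exact sum_inv_one_add_abs_sub_sq_le_four y s
    _ = 4 * c := mul_comm _ _

theorem abs_comp_sub_le_of_two_mul_le_abs (hψ : ∀ x, |ψ x| ≤ c / (1 + |x|) ^ 2) {P T x k : ℝ}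
    (hP : 0 < P) (hT : 0 < T) (hk : |k| ≤ T * P) (hx : 2 * T ≤ |x|) :
    |ψ (2 * P * x - k)| ≤ c / (P * x) ^ 2 := by
  have hfar : P * |x| ≤ |2 * P * x - k| := by
    have := abs_sub_abs_le_abs_sub (2 * P * x) k
    rw [abs_mul, abs_mul, abs_of_pos hP, abs_two] at this
    nlinarith
  calc |ψ (2 * P * x - k)| ≤ c / (1 + |2 * P * x - k|) ^ 2 := hψ _
    _ ≤ c / (P * |x|) ^ 2 := by
        gcongr
        · exact nonneg_of_abs_le_div_one_add_sq hψ
        · have : 0 < |x| := by linarith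
          positivity
        · linarith
    _ = c / (P * x) ^ 2 := by rw [mul_pow, sq_abs, mul_pow]

theorem sq_mul_abs_sum_le_of_two_mul_le_abs (hψ : ∀ x, |ψ x| ≤ c / (1 + |x|) ^ 2) {P T x : ℝ}
    (hP : 1 ≤ P) (hT : 1 ≤ T) {m : Finset ℕ} (hm : m ⊆ range ⌈T * P⌉₊) (hx : 2 * T ≤ |x|) :
    x ^ 2 * |∑ k ∈ m, ψ (2 * P * x - k)| ≤ 2 * T * c := by
  have hc := nonneg_of_abs_le_div_one_add_sq hψ
  have hx0 : x ≠ 0 := by rintro rfl; simp at hx; linarith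
  have hcard : (#m : ℝ) ≤ 2 * T * P := by
    have h1 : #m ≤ ⌈T * P⌉₊ := by simpa using card_le_card hm
    have h2 : (⌈T * P⌉₊ : ℝ) < T * P + 1 := Nat.ceil_lt_add_one (by positivity)
    have h3 : (#m : ℝ) ≤ ⌈T * P⌉₊ := by exact_mod_cast h1
    nlinarith
  have hterm : ∀ k ∈ m, |ψ (2 * P * x - k)| ≤ c / (P * x) ^ 2 := fun k hk =>
    abs_comp_sub_le_of_two_mul_le_abs hψ (by linarith) (by linarith)
      (by rw [Nat.abs_cast]; exact (Nat.lt_ceil.1 (mem_range.1 (hm hk))).le) hx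
  calc x ^ 2 * |∑ k ∈ m, ψ (2 * P * x - k)| ≤ x ^ 2 * (#m * (c / (P * x) ^ 2)) := by
        gcongr
        exact (abs_sum_le_sum_abs _ _).trans (by simpa using sum_le_sum hterm)
    _ ≤ x ^ 2 * (2 * T * P * (c / (P * x) ^ 2)) := by gcongr
    _ = 2 * T * c / P := by field_simp
    _ ≤ 2 * T * c := div_le_self (by positivity) hP

end Decay

theorem stmt_16_general (T cψ : ℝ) (hT : 1 ≤ T) :
    ∃ Cbar : ℝ,
      ∀ j : ℕ, 1 ≤ j →
        ∀ ψ : ℝ → ℝ, (∀ x : ℝ, |ψ x| ≤ cψ / (1 + |x|) ^ 2) →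
          ∀ m : Finset ℕ, m ⊆ Finset.range ⌈T * 2 ^ (j - 1)⌉₊ →
            ∀ x : ℝ, (1 + x ^ 2) * |∑ k ∈ m, ψ (2 ^ j * x - (k : ℝ))| ≤ Cbar := by
  refine ⟨4 * cψ + 16 * T ^ 2 * cψ + 2 * T * cψ, fun j hj ψ hψ m hm x => ?_⟩
  have hc := nonneg_of_abs_le_div_one_add_sq hψ
  have h2j : (2 : ℝ) ^ j = 2 * 2 ^ (j - 1) := by rw [← pow_succ']; congr 1; omega
  set S := ∑ k ∈ m, ψ (2 ^ j * x - (k : ℝ))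
  have hS : |S| ≤ 4 * cψ := by
    simpa using abs_sum_comp_sub_le hψ (2 ^ j * x) (m.map Nat.castEmbedding)
  have hxS : x ^ 2 * |S| ≤ 16 * T ^ 2 * cψ + 2 * T * cψ := by
    rcases le_or_gt |x| (2 * T) with hx | hx
    · have : x ^ 2 ≤ 4 * T ^ 2 := by nlinarith [sq_abs x, abs_nonneg x]
      nlinarith [abs_nonneg S]
    · have := sq_mul_abs_sum_le_of_two_mul_le_abs hψ (one_le_pow₀ one_le_two) hT hm hx.le
      rw [← h2j] at this
      nlinarith
  nlinarith

/-- For every `T ≥ 1` and `c_ψ > 0` there is a constant `C̄` depending only on `T` and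
`c_ψ` such that for every `j ≥ 1`, every `ψ` with `|ψ(x)| ≤ c_ψ (1+|x|)⁻²`, every finite
`m ⊆ {0, …, ⌈T 2^{j−1}⌉ − 1}` and every `x ∈ ℝ`,
`(1 + x²) |Σ_{k∈m} ψ(2^j x − k)| ≤ C̄`. -/
theorem stmt_16 (T cψ : ℝ) (hT : 1 ≤ T) (hcψ : 0 < cψ) :
    ∃ Cbar : ℝ,
      ∀ j : ℕ, 1 ≤ j →
        ∀ ψ : ℝ → ℝ, (∀ x : ℝ, |ψ x| ≤ cψ / (1 + |x|) ^ 2) →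
          ∀ m : Finset ℕ, m ⊆ Finset.range ⌈T * 2 ^ (j - 1)⌉₊ →
            ∀ x : ℝ, (1 + x ^ 2) * |∑ k ∈ m, ψ (2 ^ j * x - (k : ℝ))| ≤ Cbar :=
  stmt_16_general T cψ hT
end

section
/- Let T > 0, let j ≥ 1 be an integer with T 2^{j−1} ≥ 1, and let k be an integer with 0 ≤ k ≤ T 2^{j−1}. Then ∫_ℝ ψ_{jk}(x)² 𝟙_{|x| > T} dx ≤ (2 c_ψ² / 3) (T 2^{j−1})^{−3}. -/
/-!
Substituting `u = 2^j x - k` turns the integral into `∫ ψ(u)²` over the image of `{|x| > T}`.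
Since `2^j T = 2M` with `M = T 2^{j-1}` and `0 ≤ k ≤ M`, that image lies in `{|u| > M}`, and
the decay `ψ(u)² ≤ c_ψ² (1+|u|)^{-4}` integrates over `{|u| > M}` to `(2 c_ψ² / 3) (1+M)^{-3}`.
-/

open MeasureTheory Real Set

theorem integral_Ioi_one_add_rpow_neg {p : ℝ} (hp : 1 < p) {M : ℝ} (hM : -1 < M) :
    ∫ t in Ioi M, (1 + t) ^ (-p) = (1 + M) ^ (1 - p) / (p - 1) := by
  have hpre : (fun t : ℝ => 1 + t) ⁻¹' Ioi (1 + M) = Ioi M := by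
    ext t; simp
  rw [← hpre, (measurePreserving_add_left volume (1 : ℝ)).setIntegral_preimage_emb
    (measurableEmbedding_addLeft 1) (fun t => t ^ (-p)),
    integral_Ioi_rpow_of_lt (by linarith) (by linarith)]
  rw [show -p + 1 = 1 - p by ring, div_eq_div_iff] <;> [ring; linarith; linarith]

theorem integrable_one_add_abs_rpow_neg {p : ℝ} (hp : 1 < p) :
    Integrable fun u : ℝ => (1 + |u|) ^ (-p) := by
  simpa using integrable_one_add_norm (E := ℝ) (μ := volume) (r := p) (by simpa using hp)

theorem setIntegral_abs_gt_one_add_abs_rpow_neg {p : ℝ} (hp : 1 < p) {M : ℝ} (hM : 0 ≤ M) :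
    ∫ u in {u : ℝ | M < |u|}, (1 + |u|) ^ (-p) = 2 * (1 + M) ^ (1 - p) / (p - 1) := by
  have hind : ∀ u : ℝ, {u : ℝ | M < |u|}.indicator (fun u => (1 + |u|) ^ (-p)) u
      = (Ioi M).indicator (fun t => (1 + t) ^ (-p)) |u| := fun u => by
    simp [indicator]
  rw [← integral_indicator (measurableSet_lt measurable_const measurable_abs),
    funext hind, integral_comp_abs, setIntegral_indicator measurableSet_Ioi,
    Ioi_inter_Ioi, sup_eq_right.mpr hM, integral_Ioi_one_add_rpow_neg hp (by linarith)]
  ring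

theorem setIntegral_preimage_mul_sub {b : ℝ} (hb : b ≠ 0) (c : ℝ) (f : ℝ → ℝ) {s : Set ℝ}
    (hs : MeasurableSet s) :
    ∫ x in (fun x => b * x - c) ⁻¹' s, |b| * f (b * x - c) = ∫ u in s, f u := by
  have hind : (((fun x => b * x - c) ⁻¹' s).indicator fun x => |b| * f (b * x - c))
      = fun x => |b| * s.indicator f (b * x - c) := by
    ext x; by_cases hx : b * x - c ∈ s <;> simp [hx]
  rw [← integral_indicator (hs.preimage (by fun_prop)), ← integral_indicator hs, hind,
    integral_const_mul, Measure.integral_comp_mul_left (fun y => s.indicator f (y - c)),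
    integral_sub_right_eq_self, smul_eq_mul, ← mul_assoc, abs_inv,
    mul_inv_cancel₀ (abs_ne_zero.mpr hb), one_mul]

theorem setIntegral_mul_comp_mul_sub_le {f : ℝ → ℝ} {C p b c M : ℝ} {s : Set ℝ}
    (hp : 1 < p) (hb : 0 < b) (hM : 0 ≤ M) (hs : s ⊆ (fun x => b * x - c) ⁻¹' {u | M < |u|})
    (hf₀ : ∀ u, 0 ≤ f u) (hf : ∀ u, f u ≤ C * (1 + |u|) ^ (-p)) :
    ∫ x in s, b * f (b * x - c) ≤ C * (2 * (1 + M) ^ (1 - p) / (p - 1)) := by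
  set g : ℝ → ℝ := fun u => C * (1 + |u|) ^ (-p)
  have hg₀ : ∀ u, 0 ≤ g u := fun u => (hf₀ u).trans (hf u)
  have hgi : Integrable fun x => |b| * g (b * x - c) :=
    (((integrable_one_add_abs_rpow_neg hp).const_mul C).comp_sub_right c
      |>.comp_mul_left' hb.ne').const_mul _
  calc ∫ x in s, b * f (b * x - c)
      = ∫ x in s, |b| * f (b * x - c) := by rw [abs_of_pos hb]
    _ ≤ ∫ x in s, |b| * g (b * x - c) :=
        setIntegral_mono_of_nonneg (fun x _ => mul_nonneg (abs_nonneg b) (hf₀ _))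
          (fun x _ => mul_le_mul_of_nonneg_left (hf _) (abs_nonneg b)) hgi.integrableOn
    _ ≤ ∫ x in (fun x => b * x - c) ⁻¹' {u | M < |u|}, |b| * g (b * x - c) :=
        setIntegral_mono_set hgi.integrableOn
          (ae_of_all _ fun x => mul_nonneg (abs_nonneg b) (hg₀ _)) hs.eventuallyLE
    _ = ∫ u in {u : ℝ | M < |u|}, g u :=
        setIntegral_preimage_mul_sub hb.ne' c g (measurableSet_lt measurable_const measurable_abs)
    _ = C * (2 * (1 + M) ^ (1 - p) / (p - 1)) := by
        rw [integral_const_mul, setIntegral_abs_gt_one_add_abs_rpow_neg hp hM]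

theorem sq_le_mul_one_add_abs_rpow_neg_four {y c u : ℝ} (hy : |y| ≤ c / (1 + |u|) ^ 2) :
    y ^ 2 ≤ c ^ 2 * (1 + |u|) ^ (-4 : ℝ) := by
  have hpow : (1 + |u|) ^ (-4 : ℝ) = (((1 + |u|) ^ 2) ^ 2)⁻¹ := by
    rw [rpow_neg (by positivity)]; norm_cast; ring
  calc y ^ 2 = |y| ^ 2 := (sq_abs y).symm
    _ ≤ (c / (1 + |u|) ^ 2) ^ 2 := pow_le_pow_left₀ (abs_nonneg y) hy 2
    _ = c ^ 2 * (1 + |u|) ^ (-4 : ℝ) := by rw [div_pow, div_eq_mul_inv, hpow]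

theorem lt_abs_sub_of_two_mul_lt_abs {M k y : ℝ} (hk₀ : 0 ≤ k) (hkM : k ≤ M)
    (hy : 2 * M < |y|) : M < |y - k| := by
  rw [lt_abs] at hy ⊢
  rcases hy with hy | hy
  · left; linarith
  · right; linarith

theorem stmt_17_general (T cψ : ℝ) (hT : 0 < T)
    (ψ : ℝ → ℝ) (hψ : ∀ x : ℝ, |ψ x| ≤ cψ / (1 + |x|) ^ 2)
    (j : ℕ) (hj : 1 ≤ j)
    (k : ℤ) (hk0 : 0 ≤ k) (hk : (k : ℝ) ≤ T * 2 ^ (j - 1)) :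
    (∫ x in {x : ℝ | T < |x|}, ((2 : ℝ) ^ ((j : ℝ) / 2) * ψ (2 ^ j * x - (k : ℝ))) ^ 2)
      ≤ (2 * cψ ^ 2 / 3) / (T * 2 ^ (j - 1)) ^ 3 := by
  set M : ℝ := T * 2 ^ (j - 1) with hM_def
  have hM : 0 < M := by positivity
  have hscale : (2 : ℝ) ^ j * T = 2 * M := by
    rw [hM_def, ← Nat.sub_add_cancel hj, pow_succ, Nat.add_sub_cancel]; ring
  have hsub : {x : ℝ | T < |x|} ⊆ (fun x => 2 ^ j * x - (k : ℝ)) ⁻¹' {u | M < |u|} :=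
    fun x hx => lt_abs_sub_of_two_mul_lt_abs (by exact_mod_cast hk0) hk (by
      rw [abs_mul, abs_of_pos (by positivity), ← hscale]
      exact mul_lt_mul_of_pos_left hx (by positivity))
  have hsq : ∀ y : ℝ, ((2 : ℝ) ^ ((j : ℝ) / 2) * y) ^ 2 = 2 ^ j * y ^ 2 := fun y => by
    rw [mul_pow, ← rpow_natCast (_ ^ _), ← rpow_mul zero_le_two]; norm_num
  simp_rw [hsq]
  calc _ ≤ cψ ^ 2 * (2 * (1 + M) ^ (1 - 4 : ℝ) / (4 - 1)) :=
        setIntegral_mul_comp_mul_sub_le (by norm_num) (by positivity) hM.le hsub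
          (fun u => sq_nonneg _) (fun u => sq_le_mul_one_add_abs_rpow_neg_four (hψ u))
    _ = 2 * cψ ^ 2 / 3 / (1 + M) ^ 3 := by
        rw [show (1 - 4 : ℝ) = -(3 : ℕ) by norm_num, rpow_neg (by positivity), rpow_natCast]
        ring
    _ ≤ 2 * cψ ^ 2 / 3 / M ^ 3 := by gcongr; linarith

/-- For `T > 0`, `j ≥ 1` with `T 2^{j−1} ≥ 1`, and an integer `0 ≤ k ≤ T 2^{j−1}`,
`∫ ψ_{jk}(x)² 𝟙_{|x|>T} dx ≤ (2 c_ψ²/3) (T 2^{j−1})⁻³`, where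
`ψ_{jk}(x) = 2^{j/2} ψ(2^j x − k)` and `|ψ(x)| ≤ c_ψ (1+|x|)⁻²`. -/
theorem stmt_17 (T cψ : ℝ) (hT : 0 < T) (hcψ : 0 < cψ)
    (ψ : ℝ → ℝ) (hψ : ∀ x : ℝ, |ψ x| ≤ cψ / (1 + |x|) ^ 2)
    (j : ℕ) (hj : 1 ≤ j) (hTj : 1 ≤ T * 2 ^ (j - 1))
    (k : ℤ) (hk0 : 0 ≤ k) (hk : (k : ℝ) ≤ T * 2 ^ (j - 1)) :
    (∫ x in {x : ℝ | T < |x|}, ((2 : ℝ) ^ ((j : ℝ) / 2) * ψ (2 ^ j * x - (k : ℝ))) ^ 2)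
      ≤ (2 * cψ ^ 2 / 3) / (T * 2 ^ (j - 1)) ^ 3 :=
  stmt_17_general T cψ hT ψ hψ j hj k hk0 hk
end
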